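/- arXiv:math/0511019 — 9 statements merged into one kernel-verified Lean document; each statement's English description precedes it below -/
import Mathlib

section
/- Let (X,ρ,W) be a hyperbolic space and η : (0,∞) × (0,2] → (0,1]. Then η is a modulus of uniform convexity for X (i.e., the uniform convexity condition holds with δ := η(r,ε)) if and only if for all r > 0, ε ∈ (0,2], λ ∈ [0,1], and a,x,y ∈ X with ρ(x,a) ≤ r, ρ(y,a) ≤ r, ρ(x,y) ≥ εr, one has ρ((1−λ)x ⊕ λy, a) ≤ (1−γ(r,ε,λ))r, where γ(r,ε,λ) = 2λη(r,ε) if λ ≤ 1/2 and γ(r,ε,λ) = 2(1−λ)η(r,ε) otherwise. -/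
section Aux

variable {X : Type*} [MetricSpace X] (W : X → X → ℝ → X)

private lemma W_zero'
    (W1 : ∀ x y z : X, ∀ l : ℝ, l ∈ Set.Icc (0:ℝ) 1 →
      dist z (W x y l) ≤ (1 - l) * dist z x + l * dist z y)
    (x y : X) : W x y 0 = x := by
  have h := W1 x y x 0 (by norm_num)
  simp at h
  exact h.symm

private lemma W_one'
    (W1 : ∀ x y z : X, ∀ l : ℝ, l ∈ Set.Icc (0:ℝ) 1 →
      dist z (W x y l) ≤ (1 - l) * dist z x + l * dist z y)
    (x y : X) : W x y 1 = y := by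
  have h := W1 x y y 1 (by norm_num)
  simp at h
  exact h.symm

private lemma dist_W_left'
    (W1 : ∀ x y z : X, ∀ l : ℝ, l ∈ Set.Icc (0:ℝ) 1 →
      dist z (W x y l) ≤ (1 - l) * dist z x + l * dist z y)
    (W2 : ∀ x y : X, ∀ l l' : ℝ, l ∈ Set.Icc (0:ℝ) 1 → l' ∈ Set.Icc (0:ℝ) 1 →
      dist (W x y l) (W x y l') = |l - l'| * dist x y)
    (x y : X) (l : ℝ) (hl : l ∈ Set.Icc (0:ℝ) 1) :
    dist (W x y l) x = l * dist x y := by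
  have h := W2 x y l 0 hl (by norm_num)
  rw [W_zero' W W1] at h
  simpa [abs_of_nonneg hl.1] using h

private lemma dist_W_right'
    (W1 : ∀ x y z : X, ∀ l : ℝ, l ∈ Set.Icc (0:ℝ) 1 →
      dist z (W x y l) ≤ (1 - l) * dist z x + l * dist z y)
    (W2 : ∀ x y : X, ∀ l l' : ℝ, l ∈ Set.Icc (0:ℝ) 1 → l' ∈ Set.Icc (0:ℝ) 1 →
      dist (W x y l) (W x y l') = |l - l'| * dist x y)
    (x y : X) (l : ℝ) (hl : l ∈ Set.Icc (0:ℝ) 1) :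
    dist (W x y l) y = (1 - l) * dist x y := by
  have h := W2 x y l 1 hl (by norm_num)
  rw [W_one' W W1] at h
  have : |l - 1| = 1 - l := by
    rw [abs_of_nonpos (by linarith [hl.2])]; ring
  rw [this] at h
  exact h

/-- In a uniformly convex W-space, metric λ-points are unique. -/
private lemma uniq_between'
    (W1 : ∀ x y z : X, ∀ l : ℝ, l ∈ Set.Icc (0:ℝ) 1 →
      dist z (W x y l) ≤ (1 - l) * dist z x + l * dist z y)
    (η : ℝ → ℝ → ℝ)
    (hη : ∀ r ε : ℝ, 0 < r → ε ∈ Set.Ioc (0:ℝ) 2 → η r ε ∈ Set.Ioc (0:ℝ) 1)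
    (H : ∀ r ε : ℝ, ∀ a u v : X, 0 < r → ε ∈ Set.Ioc (0:ℝ) 2 →
        dist u a ≤ r → dist v a ≤ r → ε * r ≤ dist u v →
        dist (W u v (1/2)) a ≤ (1 - η r ε) * r)
    (x y z z' : X) (c : ℝ) (hc : 0 < c)
    (hzx : dist z x = c) (hz'x : dist z' x = c)
    (hzy : dist z y = dist x y - c) (hz'y : dist z' y = dist x y - c) :
    z = z' := by
  by_contra hne
  have hD : 0 < dist z z' := dist_pos.mpr hne
  -- the W-midpoint M of z, z'
  have hyM : dist y (W z z' (1/2)) ≤ dist x y - c := by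
    have h := W1 z z' y (1/2) (by norm_num)
    rw [dist_comm y z, dist_comm y z', hzy, hz'y] at h
    linarith
  have hxM : c ≤ dist x (W z z' (1/2)) := by
    have ht := dist_triangle x (W z z' (1/2)) y
    have : dist (W z z' (1/2)) y = dist y (W z z' (1/2)) := dist_comm _ _
    linarith
  set ε' := min (dist z z' / c) 2 with hε'def
  have hε' : ε' ∈ Set.Ioc (0:ℝ) 2 :=
    ⟨lt_min (div_pos hD hc) (by norm_num), min_le_right _ _⟩
  have hεc : ε' * c ≤ dist z z' := by
    calc ε' * c ≤ (dist z z' / c) * c :=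
          mul_le_mul_of_nonneg_right (min_le_left _ _) hc.le
      _ = dist z z' := div_mul_cancel₀ _ hc.ne'
  have happ := H c ε' x z z' hc hε' (le_of_eq hzx) (le_of_eq hz'x) hεc
  have hηpos : 0 < η c ε' := (hη c ε' hc hε').1
  have : dist (W z z' (1/2)) x < c := by nlinarith
  rw [dist_comm] at hxM
  linarith

private lemma aux_half'
    (W1 : ∀ x y z : X, ∀ l : ℝ, l ∈ Set.Icc (0:ℝ) 1 →
      dist z (W x y l) ≤ (1 - l) * dist z x + l * dist z y)
    (W2 : ∀ x y : X, ∀ l l' : ℝ, l ∈ Set.Icc (0:ℝ) 1 → l' ∈ Set.Icc (0:ℝ) 1 →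
      dist (W x y l) (W x y l') = |l - l'| * dist x y)
    (η : ℝ → ℝ → ℝ)
    (hη : ∀ r ε : ℝ, 0 < r → ε ∈ Set.Ioc (0:ℝ) 2 → η r ε ∈ Set.Ioc (0:ℝ) 1)
    (H : ∀ r ε : ℝ, ∀ a u v : X, 0 < r → ε ∈ Set.Ioc (0:ℝ) 2 →
        dist u a ≤ r → dist v a ≤ r → ε * r ≤ dist u v →
        dist (W u v (1/2)) a ≤ (1 - η r ε) * r)
    (r ε l : ℝ) (a u v : X) (hr : 0 < r) (hε : ε ∈ Set.Ioc (0:ℝ) 2)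
    (hl0 : 0 ≤ l) (hl2 : l ≤ 1/2)
    (hu : dist u a ≤ r) (hv : dist v a ≤ r) (hd : ε * r ≤ dist u v) :
    dist (W u v l) a ≤ (1 - 2 * l * η r ε) * r := by
  rcases hl0.eq_or_lt with h0 | hlpos
  · rw [← h0, W_zero' W W1]
    have : (1 - 2 * 0 * η r ε) * r = r := by ring
    rw [this]; exact hu
  · have hd0 : 0 < dist u v := lt_of_lt_of_le (mul_pos hε.1 hr) hd
    set D := dist u v with hD
    have hmem : l ∈ Set.Icc (0:ℝ) 1 := ⟨hl0, by linarith⟩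
    have h2l : (2*l) ∈ Set.Icc (0:ℝ) 1 := ⟨by linarith, by linarith⟩
    have hhf : (1/2:ℝ) ∈ Set.Icc (0:ℝ) 1 := by norm_num
    set m := W u v (1/2) with hm
    set q := W u m (2*l) with hq
    set p := W u v l with hp
    have dum : dist m u = (1/2) * D := dist_W_left' W W1 W2 u v (1/2) hhf
    have dvm : dist m v = (1/2) * D := by
      have := dist_W_right' W W1 W2 u v (1/2) hhf
      have e : (1 - 1/2 : ℝ) = 1/2 := by norm_num
      rw [e] at this; exact this
    have duq : dist q u = l * D := by
      have := dist_W_left' W W1 W2 u m (2*l) h2l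
      rw [dist_comm u m, dum] at this
      rw [this]; ring
    have dmq : dist q m = (1 - 2*l) * ((1/2) * D) := by
      have := dist_W_right' W W1 W2 u m (2*l) h2l
      rw [dist_comm u m, dum] at this
      exact this
    have dqv : dist q v = (1 - l) * D := by
      apply le_antisymm
      · have t := dist_triangle q m v
        have e : (1 - 2*l) * ((1/2) * D) + (1/2) * D = (1 - l) * D := by ring
        linarith
      · have t := dist_triangle u q v
        rw [dist_comm u q] at t
        have e : D - l * D = (1 - l) * D := by ring
        linarith
    have dup : dist p u = l * D := dist_W_left' W W1 W2 u v l hmem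
    have dpv : dist p v = (1 - l) * D := dist_W_right' W W1 W2 u v l hmem
    have hqp : q = p := by
      apply uniq_between' W W1 η hη H u v q p (l * D) (mul_pos hlpos hd0)
        duq dup
      · rw [dqv]; ring
      · rw [dpv]; ring
    have hma : dist m a ≤ (1 - η r ε) * r := H r ε a u v hr hε hu hv hd
    have hW1a := W1 u m a (2*l) h2l
    rw [dist_comm a u, dist_comm a m] at hW1a
    have h1 : (1 - 2*l) * dist u a ≤ (1 - 2*l) * r :=
      mul_le_mul_of_nonneg_left hu (by linarith)
    have h2 : (2*l) * dist m a ≤ (2*l) * ((1 - η r ε) * r) :=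
      mul_le_mul_of_nonneg_left hma (by linarith)
    have e : (1 - 2*l) * r + (2*l) * ((1 - η r ε) * r) = (1 - 2 * l * η r ε) * r := by
      ring
    have : dist a q ≤ (1 - 2 * l * η r ε) * r := by linarith
    rw [← hqp, dist_comm]
    exact this

end Aux

theorem stmt_2
    {X : Type*} [MetricSpace X]
    (W : X → X → ℝ → X)
    (W1 : ∀ x y z : X, ∀ l : ℝ, l ∈ Set.Icc (0:ℝ) 1 →
      dist z (W x y l) ≤ (1 - l) * dist z x + l * dist z y)
    (W2 : ∀ x y : X, ∀ l l' : ℝ, l ∈ Set.Icc (0:ℝ) 1 → l' ∈ Set.Icc (0:ℝ) 1 →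
      dist (W x y l) (W x y l') = |l - l'| * dist x y)
    (W3 : ∀ x y : X, ∀ l : ℝ, l ∈ Set.Icc (0:ℝ) 1 → W x y l = W y x (1 - l))
    (W4 : ∀ x y z w : X, ∀ l : ℝ, l ∈ Set.Icc (0:ℝ) 1 →
      dist (W x z l) (W y w l) ≤ (1 - l) * dist x y + l * dist z w)
    (η : ℝ → ℝ → ℝ)
    (hη : ∀ r ε : ℝ, 0 < r → ε ∈ Set.Ioc (0:ℝ) 2 → η r ε ∈ Set.Ioc (0:ℝ) 1)
    : (∀ r ε : ℝ, ∀ a u v : X, 0 < r → ε ∈ Set.Ioc (0:ℝ) 2 →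
        dist u a ≤ r → dist v a ≤ r → ε * r ≤ dist u v →
        dist (W u v (1/2)) a ≤ (1 - η r ε) * r)
      ↔
      (∀ r ε l : ℝ, ∀ a u v : X, 0 < r → ε ∈ Set.Ioc (0:ℝ) 2 → l ∈ Set.Icc (0:ℝ) 1 →
        dist u a ≤ r → dist v a ≤ r → ε * r ≤ dist u v →
        dist (W u v l) a ≤
          (1 - (if l ≤ 1/2 then 2 * l * η r ε else 2 * (1 - l) * η r ε)) * r) := by
  constructor
  · intro H r ε l a u v hr hε hl hu hv hd
    by_cases hhalf : l ≤ 1/2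
    · rw [if_pos hhalf]
      exact aux_half' W W1 W2 η hη H r ε l a u v hr hε hl.1 hhalf hu hv hd
    · rw [if_neg hhalf]
      rw [W3 u v l hl]
      push_neg at hhalf
      have hd' : ε * r ≤ dist v u := by rwa [dist_comm]
      exact aux_half' W W1 W2 η hη H r ε (1-l) a v u hr hε (by linarith [hl.2])
        (by linarith) hv hu hd'
  · intro H r ε a u v hr hε hu hv hd
    have h := H r ε (1/2) a u v hr hε (by norm_num) hu hv hd
    rw [if_pos (le_refl (1/2:ℝ))] at h
    have e : (1 - 2 * (1/2) * η r ε) * r = (1 - η r ε) * r := by ring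
    rw [e] at h
    exact h
end

section
/- Let (X,ρ,W) be a uniformly convex hyperbolic space with modulus of uniform convexity η. Then for any r > 0, ε ∈ (0,2], λ ∈ [0,1], and a,x,y ∈ X with ρ(x,a) ≤ r, ρ(y,a) ≤ r, ρ(x,y) ≥ εr, one has ρ((1−λ)x ⊕ λy, a) ≤ (1 − 2λ(1−λ)η(r,ε))·r. -/
/-!
Uniform convexity makes geodesic segments unique: two points between `x` and `z` at the same
distance from `x` coincide, since otherwise their midpoint would be strictly closer to `x`
(uniform convexity) and no farther from `z` (axiom W1), contradicting the triangle inequality.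
Hence `W x y (s * t) = W x (W x y t) s`. For `λ ≤ 1/2` this writes `(1-λ)x ⊕ λy` as a point of
the segment from `x` to the midpoint `m` of `x, y`, and W1 together with the midpoint bound
`ρ(m, a) ≤ (1 - η) r` gives `ρ((1-λ)x ⊕ λy, a) ≤ (1 - 2λη) r`; the case `λ ≥ 1/2` follows by
symmetry (W3).
-/

namespace WHyperbolic

variable {X : Type*} [MetricSpace X]

def W1 (W : X → X → ℝ → X) : Prop :=
  ∀ x y z : X, ∀ l : ℝ, l ∈ Set.Icc (0:ℝ) 1 →
    dist z (W x y l) ≤ (1 - l) * dist z x + l * dist z y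

def W2 (W : X → X → ℝ → X) : Prop :=
  ∀ x y : X, ∀ l l' : ℝ, l ∈ Set.Icc (0:ℝ) 1 → l' ∈ Set.Icc (0:ℝ) 1 →
    dist (W x y l) (W x y l') = |l - l'| * dist x y

def IsModulusOfUniformConvexity (W : X → X → ℝ → X) (η : ℝ → ℝ → ℝ) : Prop :=
  (∀ r ε : ℝ, 0 < r → ε ∈ Set.Ioc (0:ℝ) 2 → η r ε ∈ Set.Ioc (0:ℝ) 1) ∧
  ∀ r ε : ℝ, ∀ a u v : X, 0 < r → ε ∈ Set.Ioc (0:ℝ) 2 →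
    dist u a ≤ r → dist v a ≤ r → ε * r ≤ dist u v → dist (W u v (1/2)) a ≤ (1 - η r ε) * r

variable {W : X → X → ℝ → X}

theorem W_zero (h1 : W1 W) (x y : X) : W x y 0 = x := by
  have h := h1 x y x 0 ⟨le_rfl, zero_le_one⟩
  rw [dist_self, zero_mul, add_zero, sub_zero, one_mul] at h
  exact (dist_le_zero.mp h).symm

theorem W_one (h1 : W1 W) (x y : X) : W x y 1 = y := by
  have h := h1 x y y 1 ⟨zero_le_one, le_rfl⟩
  rw [dist_self, mul_zero, sub_self, zero_mul, zero_add] at h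
  exact (dist_le_zero.mp h).symm

theorem dist_left_W (h1 : W1 W) (h2 : W2 W) (x y : X) {l : ℝ} (hl : l ∈ Set.Icc (0:ℝ) 1) :
    dist x (W x y l) = l * dist x y := by
  have h := h2 x y l 0 hl ⟨le_rfl, zero_le_one⟩
  rwa [W_zero h1, sub_zero, abs_of_nonneg hl.1, dist_comm] at h

theorem dist_W_right (h1 : W1 W) (h2 : W2 W) (x y : X) {l : ℝ} (hl : l ∈ Set.Icc (0:ℝ) 1) :
    dist (W x y l) y = (1 - l) * dist x y := by
  have h := h2 x y l 1 hl ⟨zero_le_one, le_rfl⟩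
  rwa [W_one h1, abs_of_nonpos (by linarith [hl.2]), neg_sub] at h

theorem eq_of_dist_add_dist_eq (h1 : W1 W) {η : ℝ → ℝ → ℝ}
    (hη : IsModulusOfUniformConvexity W η) {x z p q : X}
    (hp : dist x p + dist p z = dist x z) (hq : dist x q + dist q z = dist x z)
    (hpq : dist x p = dist x q) : p = q := by
  by_contra hne
  set R := dist x p
  rcases (dist_nonneg : 0 ≤ R).eq_or_lt with hR | hR
  · exact hne ((dist_eq_zero.mp hR.symm).symm.trans (dist_eq_zero.mp (hR.trans hpq).symm))
  have hε : dist p q / R ∈ Set.Ioc (0:ℝ) 2 := by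
    refine ⟨div_pos (dist_pos.mpr hne) hR, (div_le_iff₀ hR).mpr ?_⟩
    linarith [dist_triangle_left p q x]
  have hmx : dist (W p q (1/2)) x ≤ (1 - η R (dist p q / R)) * R :=
    hη.2 R _ x p q hR hε (dist_comm p x).le (by rw [dist_comm, ← hpq])
      (div_mul_cancel₀ _ hR.ne').le
  have hη_pos : 0 < η R (dist p q / R) := (hη.1 R _ hR hε).1
  have hzm := h1 p q z (1/2) ⟨by norm_num, by norm_num⟩
  rw [dist_comm z p, dist_comm z q] at hzm
  have hxz : dist x z ≤ dist (W p q (1/2)) x + dist z (W p q (1/2)) := by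
    rw [dist_comm _ x, dist_comm z]
    exact dist_triangle x (W p q (1/2)) z
  nlinarith [mul_pos hη_pos hR]

theorem W_mul (h1 : W1 W) (h2 : W2 W) {η : ℝ → ℝ → ℝ} (hη : IsModulusOfUniformConvexity W η)
    (x y : X) {s t : ℝ} (hs : s ∈ Set.Icc (0:ℝ) 1) (ht : t ∈ Set.Icc (0:ℝ) 1) :
    W x y (s * t) = W x (W x y t) s := by
  have hst : s * t ∈ Set.Icc (0:ℝ) 1 :=
    ⟨mul_nonneg hs.1 ht.1, mul_le_one₀ hs.2 ht.1 ht.2⟩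
  have hpz : dist (W x y (s * t)) (W x y t) = (1 - s) * (t * dist x y) := by
    rw [h2 x y _ _ hst ht, abs_of_nonpos (by nlinarith [hs.2, ht.1])]
    ring
  refine eq_of_dist_add_dist_eq (x := x) (z := W x y t) h1 hη ?_ ?_ ?_
  · rw [dist_left_W h1 h2 x y hst, hpz, dist_left_W h1 h2 x y ht]
    ring
  · rw [dist_left_W h1 h2 _ _ hs, dist_W_right h1 h2 _ _ hs]
    ring
  · rw [dist_left_W h1 h2 x y hst, dist_left_W h1 h2 _ _ hs, dist_left_W h1 h2 x y ht, mul_assoc]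

theorem dist_W_le_of_le_half (h1 : W1 W) (h2 : W2 W) {η : ℝ → ℝ → ℝ}
    (hη : IsModulusOfUniformConvexity W η) {r ε l : ℝ} {a u v : X} (hr : 0 < r)
    (hε : ε ∈ Set.Ioc (0:ℝ) 2) (hl₀ : 0 ≤ l) (hl : l ≤ 1/2)
    (hu : dist u a ≤ r) (hv : dist v a ≤ r) (huv : ε * r ≤ dist u v) :
    dist (W u v l) a ≤ (1 - 2 * l * (1 - l) * η r ε) * r := by
  have h2l : 2 * l ∈ Set.Icc (0:ℝ) 1 := ⟨by linarith, by linarith⟩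
  have hmid : dist (W u v (1/2)) a ≤ (1 - η r ε) * r := hη.2 r ε a u v hr hε hu hv huv
  have hη_nonneg : 0 ≤ η r ε := (hη.1 r ε hr hε).1.le
  have hsegment : W u v l = W u (W u v (1/2)) (2 * l) := by
    rw [← W_mul h1 h2 hη u v h2l ⟨by norm_num, by norm_num⟩]
    ring_nf
  rw [hsegment, dist_comm]
  calc dist a (W u (W u v (1/2)) (2 * l))
      ≤ (1 - 2 * l) * dist u a + 2 * l * dist (W u v (1/2)) a := by
        simpa only [dist_comm a] using h1 u (W u v (1/2)) a (2 * l) h2l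
    _ ≤ (1 - 2 * l) * r + 2 * l * ((1 - η r ε) * r) := by gcongr; linarith
    _ ≤ (1 - 2 * l * (1 - l) * η r ε) * r := by
        nlinarith [mul_nonneg (mul_nonneg hl₀ hl₀) (mul_nonneg hη_nonneg hr.le)]

end WHyperbolic

theorem stmt_3_general
    {X : Type*} [MetricSpace X]
    (W : X → X → ℝ → X)
    (W1 : ∀ x y z : X, ∀ l : ℝ, l ∈ Set.Icc (0:ℝ) 1 →
      dist z (W x y l) ≤ (1 - l) * dist z x + l * dist z y)
    (W2 : ∀ x y : X, ∀ l l' : ℝ, l ∈ Set.Icc (0:ℝ) 1 → l' ∈ Set.Icc (0:ℝ) 1 →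
      dist (W x y l) (W x y l') = |l - l'| * dist x y)
    (W3 : ∀ x y : X, ∀ l : ℝ, l ∈ Set.Icc (0:ℝ) 1 → W x y l = W y x (1 - l))
    (η : ℝ → ℝ → ℝ)
    (hη : ∀ r ε : ℝ, 0 < r → ε ∈ Set.Ioc (0:ℝ) 2 → η r ε ∈ Set.Ioc (0:ℝ) 1)
    (hmod : ∀ r ε : ℝ, ∀ a u v : X, 0 < r → ε ∈ Set.Ioc (0:ℝ) 2 →
      dist u a ≤ r → dist v a ≤ r → ε * r ≤ dist u v →
      dist (W u v (1/2)) a ≤ (1 - η r ε) * r)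
    : ∀ r ε l : ℝ, ∀ a u v : X, 0 < r → ε ∈ Set.Ioc (0:ℝ) 2 → l ∈ Set.Icc (0:ℝ) 1 →
      dist u a ≤ r → dist v a ≤ r → ε * r ≤ dist u v →
      dist (W u v l) a ≤ (1 - 2 * l * (1 - l) * η r ε) * r := by
  intro r ε l a u v hr hε hl hu hv huv
  have hmodulus : WHyperbolic.IsModulusOfUniformConvexity W η := ⟨hη, hmod⟩
  rcases le_or_gt l (1/2) with hl₂ | hl₂
  · exact WHyperbolic.dist_W_le_of_le_half W1 W2 hmodulus hr hε hl.1 hl₂ hu hv huv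
  · have h := WHyperbolic.dist_W_le_of_le_half W1 W2 hmodulus (l := 1 - l) hr hε
      (by linarith [hl.2]) (by linarith) hv hu (by rwa [dist_comm])
    rw [W3 u v l hl]
    convert h using 3
    ring

theorem stmt_3
    {X : Type*} [MetricSpace X]
    (W : X → X → ℝ → X)
    (W1 : ∀ x y z : X, ∀ l : ℝ, l ∈ Set.Icc (0:ℝ) 1 →
      dist z (W x y l) ≤ (1 - l) * dist z x + l * dist z y)
    (W2 : ∀ x y : X, ∀ l l' : ℝ, l ∈ Set.Icc (0:ℝ) 1 → l' ∈ Set.Icc (0:ℝ) 1 →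
      dist (W x y l) (W x y l') = |l - l'| * dist x y)
    (W3 : ∀ x y : X, ∀ l : ℝ, l ∈ Set.Icc (0:ℝ) 1 → W x y l = W y x (1 - l))
    (W4 : ∀ x y z w : X, ∀ l : ℝ, l ∈ Set.Icc (0:ℝ) 1 →
      dist (W x z l) (W y w l) ≤ (1 - l) * dist x y + l * dist z w)
    (η : ℝ → ℝ → ℝ)
    (hη : ∀ r ε : ℝ, 0 < r → ε ∈ Set.Ioc (0:ℝ) 2 → η r ε ∈ Set.Ioc (0:ℝ) 1)
    (hmod : ∀ r ε : ℝ, ∀ a u v : X, 0 < r → ε ∈ Set.Ioc (0:ℝ) 2 →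
      dist u a ≤ r → dist v a ≤ r → ε * r ≤ dist u v →
      dist (W u v (1/2)) a ≤ (1 - η r ε) * r)
    : ∀ r ε l : ℝ, ∀ a u v : X, 0 < r → ε ∈ Set.Ioc (0:ℝ) 2 → l ∈ Set.Icc (0:ℝ) 1 →
      dist u a ≤ r → dist v a ≤ r → ε * r ≤ dist u v →
      dist (W u v l) a ≤ (1 - 2 * l * (1 - l) * η r ε) * r :=
  stmt_3_general W W1 W2 W3 η hη hmod
end

section
/- Let (X,ρ,W) be a hyperbolic space, C ⊆ X nonempty convex, T : C → C nonexpansive, (λ_n) a sequence in [0,1], and (x_n) the Krasnoselski–Mann iteration starting from x ∈ C. Then for every y ∈ C and n ∈ ℕ, ρ(x_n, y) ≤ ρ(x, y) + (∑_{i=0}^{n−1} λ_i)·ρ(y, Ty). -/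
theorem stmt_6
    {X : Type*} [MetricSpace X]
    (W : X → X → ℝ → X)
    (W1 : ∀ x y z : X, ∀ l : ℝ, l ∈ Set.Icc (0:ℝ) 1 →
      dist z (W x y l) ≤ (1 - l) * dist z x + l * dist z y)
    (W2 : ∀ x y : X, ∀ l l' : ℝ, l ∈ Set.Icc (0:ℝ) 1 → l' ∈ Set.Icc (0:ℝ) 1 →
      dist (W x y l) (W x y l') = |l - l'| * dist x y)
    (W3 : ∀ x y : X, ∀ l : ℝ, l ∈ Set.Icc (0:ℝ) 1 → W x y l = W y x (1 - l))
    (W4 : ∀ x y z w : X, ∀ l : ℝ, l ∈ Set.Icc (0:ℝ) 1 →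
      dist (W x z l) (W y w l) ≤ (1 - l) * dist x y + l * dist z w)
    (C : Set X) (hCne : C.Nonempty)
    (hconv : ∀ u ∈ C, ∀ v ∈ C, ∀ l : ℝ, l ∈ Set.Icc (0:ℝ) 1 → W u v l ∈ C)
    (T : X → X) (hT : ∀ u ∈ C, T u ∈ C)
    (hTne : ∀ u ∈ C, ∀ v ∈ C, dist (T u) (T v) ≤ dist u v)
    (lam : ℕ → ℝ) (hlam : ∀ n, lam n ∈ Set.Icc (0:ℝ) 1)
    (x : X) (hx : x ∈ C)
    (xseq : ℕ → X) (hx0 : xseq 0 = x)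
    (hxs : ∀ n, xseq (n + 1) = W (xseq n) (T (xseq n)) (lam n))
    : ∀ y ∈ C, ∀ n : ℕ,
      dist (xseq n) y ≤ dist x y + (∑ i ∈ Finset.range n, lam i) * dist y (T y) := by
  intro y hy n
  have hmem : ∀ n, xseq n ∈ C := by
    intro n
    induction n with
    | zero => rw [hx0]; exact hx
    | succ k ih => rw [hxs]; exact hconv _ ih _ (hT _ ih) _ (hlam k)
  induction n with
  | zero => simp [hx0]
  | succ k ih =>
    have hl := hlam k
    obtain ⟨hl0, hl1⟩ := hl
    have step : dist (xseq (k+1)) y ≤ dist (xseq k) y + lam k * dist y (T y) := by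
      rw [hxs, dist_comm]
      calc dist y (W (xseq k) (T (xseq k)) (lam k))
          ≤ (1 - lam k) * dist y (xseq k) + lam k * dist y (T (xseq k)) :=
            W1 _ _ _ _ (hlam k)
        _ ≤ (1 - lam k) * dist y (xseq k) + lam k * (dist y (T y) + dist (T y) (T (xseq k))) := by
            gcongr; exact dist_triangle _ _ _
        _ ≤ (1 - lam k) * dist y (xseq k) + lam k * (dist y (T y) + dist y (xseq k)) := by
            gcongr; exact hTne _ hy _ (hmem k)
        _ = dist y (xseq k) + lam k * dist y (T y) := by ring
        _ = dist (xseq k) y + lam k * dist y (T y) := by rw [dist_comm]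
    calc dist (xseq (k+1)) y ≤ dist (xseq k) y + lam k * dist y (T y) := step
      _ ≤ dist x y + (∑ i ∈ Finset.range k, lam i) * dist y (T y) + lam k * dist y (T y) := by
          gcongr
      _ = dist x y + (∑ i ∈ Finset.range (k+1), lam i) * dist y (T y) := by
          rw [Finset.sum_range_succ]; ring
end

section
/- Let (X,ρ,W) be a uniformly convex hyperbolic space with modulus η such that η(r,ε) = ε·η̃(r,ε) where η̃ is non-decreasing in ε (for fixed r) and η is non-increasing in r (for fixed ε). Let (x_n) be the Krasnoselski–Mann iteration of a nonexpansive T : C → C on a nonempty convex C with coefficients λ_n ∈ [0,1]. Suppose x,y ∈ C, n ∈ ℕ, and δ, a > 0 satisfy ρ(x_n,y) + ρ(y,Ty) ≤ δ and a ≤ ρ(x_n, T x_n). Then ρ(x_{n+1}, y) ≤ ρ(x_n, y) + ρ(y, Ty) − 2aλ_n(1−λ_n)·η̃(δ, a/δ). -/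
/-!
Uniform convexity makes every point `W x y l` the only point `z` with `d(x, z) ≤ l d(x, y)` and
`d(z, y) ≤ (1 - l) d(x, y)`. Hence `W x y l` lies on the segment from `x` to the midpoint `m` of
`x, y` (for `l ≤ 1/2`) or on the segment from `m` to `y` (for `l ≥ 1/2`), so axiom (W1) bounds
`d(W x y l, p)` by a convex combination of `d(x, p)` or `d(y, p)` with `d(m, p)`, the weight of `m`
being `2 min(l, 1 - l) ≥ 2 l (1 - l)`. For a Krasnoselski–Mann step both `x_n` and `T x_n` lie within
`s = d(x_n, y) + d(y, Ty)` of `y` and at distance at least `a` from each other, so the modulus pushes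
the midpoint to within `s - a η̃(s, a/s) ≤ s - a η̃(δ, a/δ)` of `y`.
-/

open Set

section

variable {X : Type*} [MetricSpace X]

/-- Axiom (W1): a convex structure in the sense of Takahashi. -/
def IsConvexStructure (W : X → X → ℝ → X) : Prop :=
  ∀ x y z : X, ∀ l : ℝ, l ∈ Icc (0:ℝ) 1 → dist z (W x y l) ≤ (1 - l) * dist z x + l * dist z y

def IsStrictlyConvex (W : X → X → ℝ → X) : Prop :=
  ∀ (a u v : X) (r : ℝ), dist u a ≤ r → dist v a ≤ r → u ≠ v → dist (W u v (1/2)) a < r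

def IsModulusOfUniformConvexity (W : X → X → ℝ → X) (η : ℝ → ℝ → ℝ) : Prop :=
  (∀ r ε : ℝ, 0 < r → ε ∈ Ioc (0:ℝ) 2 → η r ε ∈ Ioc (0:ℝ) 1) ∧
  ∀ r ε : ℝ, ∀ a u v : X, 0 < r → ε ∈ Ioc (0:ℝ) 2 →
    dist u a ≤ r → dist v a ≤ r → ε * r ≤ dist u v → dist (W u v (1/2)) a ≤ (1 - η r ε) * r

variable {W : X → X → ℝ → X}

theorem IsModulusOfUniformConvexity.isStrictlyConvex {η : ℝ → ℝ → ℝ}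
    (hη : IsModulusOfUniformConvexity W η) : IsStrictlyConvex W := by
  intro a u v r hu hv huv
  have huv_pos : 0 < dist u v := dist_pos.mpr huv
  have huv_le : dist u v ≤ 2 * r := by linarith [dist_triangle_right u v a]
  have hr : 0 < r := by linarith
  have hε : dist u v / r ∈ Ioc (0:ℝ) 2 := ⟨by positivity, (div_le_iff₀ hr).mpr huv_le⟩
  have hmid := hη.2 r _ a u v hr hε hu hv (div_mul_cancel₀ _ hr.ne').le
  nlinarith [(hη.1 r _ hr hε).1]

namespace IsConvexStructure

variable (hW : IsConvexStructure W)
include hW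

theorem dist_left_le (x y : X) {l : ℝ} (hl : l ∈ Icc (0:ℝ) 1) :
    dist x (W x y l) ≤ l * dist x y := by
  simpa using hW x y x l hl

theorem dist_right_le (x y : X) {l : ℝ} (hl : l ∈ Icc (0:ℝ) 1) :
    dist (W x y l) y ≤ (1 - l) * dist x y := by
  simpa [dist_comm] using hW x y y l hl

theorem eq_of_dist_le (hS : IsStrictlyConvex W) {x y z z' : X} {l : ℝ}
    (hz : dist x z ≤ l * dist x y) (hzy : dist z y ≤ (1 - l) * dist x y)
    (hz' : dist x z' ≤ l * dist x y) (hz'y : dist z' y ≤ (1 - l) * dist x y) : z = z' := by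
  by_contra hne
  have hmx : dist (W z z' (1/2)) x < l * dist x y :=
    hS x z z' _ (by rwa [dist_comm]) (by rwa [dist_comm]) hne
  have hmy : dist y (W z z' (1/2)) ≤ (1 - l) * dist x y := by
    have := hW z z' y (1/2) (by norm_num)
    rw [dist_comm y z, dist_comm y z'] at this
    linarith
  linarith [dist_triangle x (W z z' (1/2)) y, dist_comm x (W z z' (1/2)), dist_comm y (W z z' (1/2))]

theorem eq_of_dist_le_of_mem (hS : IsStrictlyConvex W) {x y z : X} {l : ℝ} (hl : l ∈ Icc (0:ℝ) 1)
    (hz : dist x z ≤ l * dist x y) (hzy : dist z y ≤ (1 - l) * dist x y) : W x y l = z :=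
  hW.eq_of_dist_le hS (hW.dist_left_le x y hl) (hW.dist_right_le x y hl) hz hzy

theorem W_eq_W_midpoint_left (hS : IsStrictlyConvex W) (x y : X) {l : ℝ} (hl0 : 0 ≤ l)
    (hl : l ≤ 1/2) : W x y l = W x (W x y (1/2)) (2 * l) := by
  set m := W x y (1/2)
  have h2l : 2 * l ∈ Icc (0:ℝ) 1 := ⟨by linarith, by linarith⟩
  have hxm : dist x m ≤ 1/2 * dist x y := hW.dist_left_le x y (by norm_num)
  have hmy : dist m y ≤ 1/2 * dist x y := by
    have := hW.dist_right_le x y (l := 1/2) (by norm_num); norm_num at this ⊢; linarith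
  refine hW.eq_of_dist_le_of_mem hS ⟨hl0, by linarith⟩ ?_ ?_
  · calc dist x (W x m (2 * l)) ≤ 2 * l * dist x m := hW.dist_left_le x m h2l
      _ ≤ 2 * l * (1/2 * dist x y) := by gcongr
      _ = l * dist x y := by ring
  · calc dist (W x m (2 * l)) y ≤ dist (W x m (2 * l)) m + dist m y := dist_triangle _ _ _
      _ ≤ (1 - 2 * l) * dist x m + 1/2 * dist x y := add_le_add (hW.dist_right_le x m h2l) hmy
      _ ≤ (1 - 2 * l) * (1/2 * dist x y) + 1/2 * dist x y := by gcongr; linarith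
      _ = (1 - l) * dist x y := by ring

theorem W_eq_W_midpoint_right (hS : IsStrictlyConvex W) (x y : X) {l : ℝ} (hl : 1/2 ≤ l)
    (hl1 : l ≤ 1) : W x y l = W (W x y (1/2)) y (2 * l - 1) := by
  set m := W x y (1/2)
  have h2l : 2 * l - 1 ∈ Icc (0:ℝ) 1 := ⟨by linarith, by linarith⟩
  have hxm : dist x m ≤ 1/2 * dist x y := hW.dist_left_le x y (by norm_num)
  have hmy : dist m y ≤ 1/2 * dist x y := by
    have := hW.dist_right_le x y (l := 1/2) (by norm_num); norm_num at this ⊢; linarith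
  refine hW.eq_of_dist_le_of_mem hS ⟨by linarith, hl1⟩ ?_ ?_
  · calc dist x (W m y (2 * l - 1)) ≤ dist x m + dist m (W m y (2 * l - 1)) := dist_triangle _ _ _
      _ ≤ 1/2 * dist x y + (2 * l - 1) * dist m y := by
          gcongr
          exact hW.dist_left_le m y h2l
      _ ≤ 1/2 * dist x y + (2 * l - 1) * (1/2 * dist x y) := by gcongr; linarith
      _ = l * dist x y := by ring
  · calc dist (W m y (2 * l - 1)) y ≤ (1 - (2 * l - 1)) * dist m y := hW.dist_right_le m y h2l
      _ ≤ (1 - (2 * l - 1)) * (1/2 * dist x y) := by gcongr; linarith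
      _ = (1 - l) * dist x y := by ring

theorem dist_le_of_dist_midpoint_le (hS : IsStrictlyConvex W) {x y p : X} {l r c : ℝ}
    (hl : l ∈ Icc (0:ℝ) 1) (hc : 0 ≤ c) (hx : dist x p ≤ r) (hy : dist y p ≤ r)
    (hm : dist (W x y (1/2)) p ≤ r - c) : dist (W x y l) p ≤ r - 2 * l * (1 - l) * c := by
  obtain ⟨hl0, hl1⟩ := hl
  rcases le_total l (1/2) with hl2 | hl2
  · rw [hW.W_eq_W_midpoint_left hS x y hl0 hl2, dist_comm]
    calc dist p (W x (W x y (1/2)) (2 * l))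
        ≤ (1 - 2 * l) * dist p x + 2 * l * dist p (W x y (1/2)) :=
          hW _ _ p _ ⟨by linarith, by linarith⟩
      _ ≤ (1 - 2 * l) * r + 2 * l * (r - c) := by
          rw [dist_comm p x, dist_comm p]
          gcongr
          linarith
      _ ≤ r - 2 * l * (1 - l) * c := by nlinarith [mul_nonneg (mul_nonneg hl0 hl0) hc]
  · rw [hW.W_eq_W_midpoint_right hS x y hl2 hl1, dist_comm]
    calc dist p (W (W x y (1/2)) y (2 * l - 1))
        ≤ (1 - (2 * l - 1)) * dist p (W x y (1/2)) + (2 * l - 1) * dist p y :=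
          hW _ _ p _ ⟨by linarith, by linarith⟩
      _ ≤ (1 - (2 * l - 1)) * (r - c) + (2 * l - 1) * r := by
          rw [dist_comm p y, dist_comm p]
          gcongr
          · linarith
          · linarith
      _ ≤ r - 2 * l * (1 - l) * c := by
          nlinarith [mul_nonneg (mul_nonneg (sub_nonneg.mpr hl1) (sub_nonneg.mpr hl1)) hc]

end IsConvexStructure
theorem IsModulusOfUniformConvexity.dist_midpoint_le_sub {η ηt : ℝ → ℝ → ℝ}
    (hη : IsModulusOfUniformConvexity W η)
    (hdec : ∀ r s ε : ℝ, 0 < r → r ≤ s → ε ∈ Ioc (0:ℝ) 2 → η s ε ≤ η r ε)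
    (hfact : ∀ r ε : ℝ, 0 < r → ε ∈ Ioc (0:ℝ) 2 → η r ε = ε * ηt r ε)
    (hinc : ∀ r ε ε' : ℝ, 0 < r → ε ∈ Ioc (0:ℝ) 2 → ε' ∈ Ioc (0:ℝ) 2 →
      ε ≤ ε' → ηt r ε ≤ ηt r ε')
    {p u v : X} {a s δ : ℝ} (ha : 0 < a) (hu : dist u p ≤ s) (hv : dist v p ≤ s)
    (huv : a ≤ dist u v) (hsδ : s ≤ δ) :
    dist (W u v (1/2)) p ≤ s - a * ηt δ (a / δ) := by
  have ha2s : a ≤ 2 * s := by linarith [dist_triangle_right u v p]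
  have hs : 0 < s := by linarith
  have hδ : 0 < δ := by linarith
  have hεs : a / s ∈ Ioc (0:ℝ) 2 := ⟨by positivity, (div_le_iff₀ hs).mpr ha2s⟩
  have hεδ : a / δ ∈ Ioc (0:ℝ) 2 := ⟨by positivity, (div_le_iff₀ hδ).mpr (by linarith)⟩
  have hmid := hη.2 s (a / s) p u v hs hεs hu hv (by rwa [div_mul_cancel₀ _ hs.ne'])
  have hε_mono : ηt s (a / δ) ≤ ηt s (a / s) :=
    hinc s _ _ hs hεδ hεs (div_le_div_of_nonneg_left ha.le hs hsδ)
  have hr_anti : ηt δ (a / δ) ≤ ηt s (a / δ) := by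
    have := hdec s δ (a / δ) hs hsδ hεδ
    rw [hfact s _ hs hεδ, hfact δ _ hδ hεδ] at this
    exact le_of_mul_le_mul_left this (div_pos ha hδ)
  calc dist (W u v (1/2)) p ≤ (1 - a / s * ηt s (a / s)) * s := by rwa [← hfact s _ hs hεs]
    _ = s - a * ηt s (a / s) := by field_simp
    _ ≤ s - a * ηt δ (a / δ) := by gcongr; linarith

end

theorem krasnoselskiMann_mem {X : Type*} {W : X → X → ℝ → X} {C : Set X}
    (hconv : ∀ u ∈ C, ∀ v ∈ C, ∀ l : ℝ, l ∈ Icc (0:ℝ) 1 → W u v l ∈ C)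
    {T : X → X} (hT : ∀ u ∈ C, T u ∈ C) {lam : ℕ → ℝ} (hlam : ∀ n, lam n ∈ Icc (0:ℝ) 1)
    {xseq : ℕ → X} (hx0 : xseq 0 ∈ C) (hxs : ∀ n, xseq (n + 1) = W (xseq n) (T (xseq n)) (lam n)) :
    ∀ n, xseq n ∈ C
  | 0 => hx0
  | n + 1 => by
    have hn := krasnoselskiMann_mem hconv hT hlam hx0 hxs n
    rw [hxs]
    exact hconv _ hn _ (hT _ hn) _ (hlam n)

theorem stmt_9_general
    {X : Type*} [MetricSpace X]
    (W : X → X → ℝ → X)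
    (W1 : ∀ x y z : X, ∀ l : ℝ, l ∈ Set.Icc (0:ℝ) 1 →
      dist z (W x y l) ≤ (1 - l) * dist z x + l * dist z y)
    (η : ℝ → ℝ → ℝ)
    (hη : ∀ r ε : ℝ, 0 < r → ε ∈ Set.Ioc (0:ℝ) 2 → η r ε ∈ Set.Ioc (0:ℝ) 1)
    (hmod : ∀ r ε : ℝ, ∀ a u v : X, 0 < r → ε ∈ Set.Ioc (0:ℝ) 2 →
      dist u a ≤ r → dist v a ≤ r → ε * r ≤ dist u v →
      dist (W u v (1/2)) a ≤ (1 - η r ε) * r)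
    (hdec : ∀ r s ε : ℝ, 0 < r → r ≤ s → ε ∈ Set.Ioc (0:ℝ) 2 → η s ε ≤ η r ε)
    (ηt : ℝ → ℝ → ℝ)
    (hfact : ∀ r ε : ℝ, 0 < r → ε ∈ Set.Ioc (0:ℝ) 2 → η r ε = ε * ηt r ε)
    (hinc : ∀ r ε ε' : ℝ, 0 < r → ε ∈ Set.Ioc (0:ℝ) 2 → ε' ∈ Set.Ioc (0:ℝ) 2 →
      ε ≤ ε' → ηt r ε ≤ ηt r ε')
    (C : Set X)
    (hconv : ∀ u ∈ C, ∀ v ∈ C, ∀ l : ℝ, l ∈ Set.Icc (0:ℝ) 1 → W u v l ∈ C)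
    (T : X → X) (hT : ∀ u ∈ C, T u ∈ C)
    (hTne : ∀ u ∈ C, ∀ v ∈ C, dist (T u) (T v) ≤ dist u v)
    (lam : ℕ → ℝ) (hlam : ∀ n, lam n ∈ Set.Icc (0:ℝ) 1)
    (x : X) (hx : x ∈ C)
    (xseq : ℕ → X) (hx0 : xseq 0 = x)
    (hxs : ∀ n, xseq (n + 1) = W (xseq n) (T (xseq n)) (lam n))
    : ∀ y ∈ C, ∀ n : ℕ, ∀ δ a : ℝ, 0 < δ → 0 < a →
      dist (xseq n) y + dist y (T y) ≤ δ →
      a ≤ dist (xseq n) (T (xseq n)) →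
      dist (xseq (n + 1)) y ≤
        dist (xseq n) y + dist y (T y) - 2 * a * lam n * (1 - lam n) * ηt δ (a / δ) := by
  intro y hy n δ a hδ ha hsδ hdist
  have hW : IsConvexStructure W := W1
  have hmodulus : IsModulusOfUniformConvexity W η := ⟨hη, hmod⟩
  have hxn : xseq n ∈ C := krasnoselskiMann_mem hconv hT hlam (hx0 ▸ hx) hxs n
  set s := dist (xseq n) y + dist y (T y)
  have hxy : dist (xseq n) y ≤ s := le_add_of_nonneg_right dist_nonneg
  have hTxy : dist (T (xseq n)) y ≤ s := by
    linarith [dist_triangle (T (xseq n)) (T y) y, hTne _ hxn y hy, dist_comm y (T y)]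
  have hηt : 0 < ηt δ (a / δ) := by
    have hε : a / δ ∈ Ioc (0:ℝ) 2 := ⟨by positivity, (div_le_iff₀ hδ).mpr (by
      linarith [hdist.trans (dist_triangle_right (xseq n) (T (xseq n)) y)])⟩
    have := (hη δ _ hδ hε).1
    rw [hfact δ _ hδ hε] at this
    exact pos_of_mul_pos_right this hε.1.le
  have hmid := hmodulus.dist_midpoint_le_sub hdec hfact hinc ha hxy hTxy hdist hsδ
  have := hW.dist_le_of_dist_midpoint_le hmodulus.isStrictlyConvex (hlam n)
    (mul_pos ha hηt).le hxy hTxy hmid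
  rw [hxs]
  linarith

theorem stmt_9
    {X : Type*} [MetricSpace X]
    (W : X → X → ℝ → X)
    (W1 : ∀ x y z : X, ∀ l : ℝ, l ∈ Set.Icc (0:ℝ) 1 →
      dist z (W x y l) ≤ (1 - l) * dist z x + l * dist z y)
    (W2 : ∀ x y : X, ∀ l l' : ℝ, l ∈ Set.Icc (0:ℝ) 1 → l' ∈ Set.Icc (0:ℝ) 1 →
      dist (W x y l) (W x y l') = |l - l'| * dist x y)
    (W3 : ∀ x y : X, ∀ l : ℝ, l ∈ Set.Icc (0:ℝ) 1 → W x y l = W y x (1 - l))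
    (W4 : ∀ x y z w : X, ∀ l : ℝ, l ∈ Set.Icc (0:ℝ) 1 →
      dist (W x z l) (W y w l) ≤ (1 - l) * dist x y + l * dist z w)
    (η : ℝ → ℝ → ℝ)
    (hη : ∀ r ε : ℝ, 0 < r → ε ∈ Set.Ioc (0:ℝ) 2 → η r ε ∈ Set.Ioc (0:ℝ) 1)
    (hmod : ∀ r ε : ℝ, ∀ a u v : X, 0 < r → ε ∈ Set.Ioc (0:ℝ) 2 →
      dist u a ≤ r → dist v a ≤ r → ε * r ≤ dist u v →
      dist (W u v (1/2)) a ≤ (1 - η r ε) * r)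
    (hdec : ∀ r s ε : ℝ, 0 < r → r ≤ s → ε ∈ Set.Ioc (0:ℝ) 2 → η s ε ≤ η r ε)
    (ηt : ℝ → ℝ → ℝ)
    (hfact : ∀ r ε : ℝ, 0 < r → ε ∈ Set.Ioc (0:ℝ) 2 → η r ε = ε * ηt r ε)
    (hinc : ∀ r ε ε' : ℝ, 0 < r → ε ∈ Set.Ioc (0:ℝ) 2 → ε' ∈ Set.Ioc (0:ℝ) 2 →
      ε ≤ ε' → ηt r ε ≤ ηt r ε')
    (C : Set X) (hCne : C.Nonempty)
    (hconv : ∀ u ∈ C, ∀ v ∈ C, ∀ l : ℝ, l ∈ Set.Icc (0:ℝ) 1 → W u v l ∈ C)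
    (T : X → X) (hT : ∀ u ∈ C, T u ∈ C)
    (hTne : ∀ u ∈ C, ∀ v ∈ C, dist (T u) (T v) ≤ dist u v)
    (lam : ℕ → ℝ) (hlam : ∀ n, lam n ∈ Set.Icc (0:ℝ) 1)
    (x : X) (hx : x ∈ C)
    (xseq : ℕ → X) (hx0 : xseq 0 = x)
    (hxs : ∀ n, xseq (n + 1) = W (xseq n) (T (xseq n)) (lam n))
    : ∀ y ∈ C, ∀ n : ℕ, ∀ δ a : ℝ, 0 < δ → 0 < a →
      dist (xseq n) y + dist y (T y) ≤ δ →
      a ≤ dist (xseq n) (T (xseq n)) →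
      dist (xseq (n + 1)) y ≤
        dist (xseq n) y + dist y (T y) - 2 * a * lam n * (1 - lam n) * ηt δ (a / δ) :=
  stmt_9_general W W1 η hη hmod hdec ηt hfact hinc C hconv T hT hTne lam hlam x hx xseq hx0 hxs
end

section
/- Let (X,ρ,W) be a uniformly convex hyperbolic space with modulus η, non-increasing in r for fixed ε. Let C ⊆ X be nonempty convex, T : C → C nonexpansive, (λ_n) ⊆ [0,1] with witness θ : ℕ → ℕ satisfying ∑_{k=0}^{θ(n)} λ_k(1−λ_k) ≥ n for all n. Let x ∈ C and b > 0 be such that for every δ > 0 there is y ∈ C with ρ(x,y) ≤ b and ρ(y,Ty) < δ. Then lim_{n→∞} ρ(x_n, T x_n) = 0, and for all ε with 0 < ε < 2b and all n ≥ θ(⌈(b+1)/(ε·η(b+1, ε/(b+1)))⌉), one has ρ(x_n, T x_n) ≤ ε; for ε ≥ 2b, ρ(x_n, T x_n) ≤ ε for all n. -/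
set_option maxHeartbeats 1000000 in
theorem stmt_11
    {X : Type*} [MetricSpace X]
    (W : X → X → ℝ → X)
    (W1 : ∀ x y z : X, ∀ l : ℝ, l ∈ Set.Icc (0:ℝ) 1 →
      dist z (W x y l) ≤ (1 - l) * dist z x + l * dist z y)
    (W2 : ∀ x y : X, ∀ l l' : ℝ, l ∈ Set.Icc (0:ℝ) 1 → l' ∈ Set.Icc (0:ℝ) 1 →
      dist (W x y l) (W x y l') = |l - l'| * dist x y)
    (W3 : ∀ x y : X, ∀ l : ℝ, l ∈ Set.Icc (0:ℝ) 1 → W x y l = W y x (1 - l))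
    (W4 : ∀ x y z w : X, ∀ l : ℝ, l ∈ Set.Icc (0:ℝ) 1 →
      dist (W x z l) (W y w l) ≤ (1 - l) * dist x y + l * dist z w)
    (η : ℝ → ℝ → ℝ)
    (hη : ∀ r ε : ℝ, 0 < r → ε ∈ Set.Ioc (0:ℝ) 2 → η r ε ∈ Set.Ioc (0:ℝ) 1)
    (hmod : ∀ r ε : ℝ, ∀ a u v : X, 0 < r → ε ∈ Set.Ioc (0:ℝ) 2 →
      dist u a ≤ r → dist v a ≤ r → ε * r ≤ dist u v →
      dist (W u v (1/2)) a ≤ (1 - η r ε) * r)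
    (hdec : ∀ r s ε : ℝ, 0 < r → r ≤ s → ε ∈ Set.Ioc (0:ℝ) 2 → η s ε ≤ η r ε)
    (C : Set X) (hCne : C.Nonempty)
    (hconv : ∀ u ∈ C, ∀ v ∈ C, ∀ l : ℝ, l ∈ Set.Icc (0:ℝ) 1 → W u v l ∈ C)
    (T : X → X) (hT : ∀ u ∈ C, T u ∈ C)
    (hTne : ∀ u ∈ C, ∀ v ∈ C, dist (T u) (T v) ≤ dist u v)
    (lam : ℕ → ℝ) (hlam : ∀ n, lam n ∈ Set.Icc (0:ℝ) 1)
    (x : X) (hx : x ∈ C)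
    (xseq : ℕ → X) (hx0 : xseq 0 = x)
    (hxs : ∀ n, xseq (n + 1) = W (xseq n) (T (xseq n)) (lam n))
    (θ : ℕ → ℕ)
    (hθ : ∀ n : ℕ, (n : ℝ) ≤ ∑ k ∈ Finset.range (θ n + 1), lam k * (1 - lam k))
    (b : ℝ) (hb : 0 < b)
    (happrox : ∀ δ : ℝ, 0 < δ → ∃ y ∈ C, dist x y ≤ b ∧ dist y (T y) < δ)
    : Filter.Tendsto (fun n => dist (xseq n) (T (xseq n))) Filter.atTop (nhds 0) ∧
      (∀ ε : ℝ, 0 < ε → ε < 2 * b →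
        ∀ n : ℕ, θ ⌈(b + 1) / (ε * η (b + 1) (ε / (b + 1)))⌉₊ ≤ n →
          dist (xseq n) (T (xseq n)) ≤ ε) ∧
      (∀ ε : ℝ, 2 * b ≤ ε → ∀ n : ℕ, dist (xseq n) (T (xseq n)) ≤ ε) := by
    -- Basic facts about W
  have w0 : ∀ u v : X, W u v 0 = u := by
    intro u v
    have h := W1 u v u 0 (by constructor <;> norm_num)
    simp at h
    exact h.symm
  have w1 : ∀ u v : X, W u v 1 = v := by
    intro u v
    have h := W1 u v v 1 (by constructor <;> norm_num)
    simp at h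
    exact h.symm
  have wdx : ∀ u v : X, ∀ l : ℝ, l ∈ Set.Icc (0:ℝ) 1 →
      dist u (W u v l) = l * dist u v := by
    intro u v l hl
    have h := W2 u v 0 l (by constructor <;> norm_num) hl
    rw [w0, zero_sub, abs_neg, abs_of_nonneg hl.1] at h
    exact h
  have wdy : ∀ u v : X, ∀ l : ℝ, l ∈ Set.Icc (0:ℝ) 1 →
      dist (W u v l) v = (1 - l) * dist u v := by
    intro u v l hl
    have h := W2 u v l 1 hl (by constructor <;> norm_num)
    rw [w1, abs_of_nonpos (by linarith [hl.2])] at h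
    rw [h]; ring
  -- uniqueness of points with prescribed distances (from uniform convexity)
  have uniq : ∀ (a u p q : X) (s : ℝ), 0 < s →
      dist a p = s → dist a q = s →
      dist p u = dist a u - s → dist q u = dist a u - s → p = q := by
    intro a u p q s hs hap haq hpu hqu
    by_contra hne
    have hpq : 0 < dist p q := dist_pos.mpr hne
    have hεIoc : dist p q / s ∈ Set.Ioc (0:ℝ) 2 := by
      constructor
      · positivity
      · rw [div_le_iff₀ hs]
        have h1 := dist_triangle p a q
        rw [dist_comm p a] at h1
        linarith
    have hm := hmod s (dist p q / s) a p q hs hεIoc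
      (by rw [dist_comm]; linarith) (by rw [dist_comm]; linarith)
      (le_of_eq (div_mul_cancel₀ _ (ne_of_gt hs)))
    have hηpos := (hη s (dist p q / s) hs hεIoc).1
    have h2 := W1 p q u (1/2) (by constructor <;> norm_num)
    have htri := dist_triangle a (W p q (1/2)) u
    rw [dist_comm a (W p q (1/2))] at htri
    rw [dist_comm u p, dist_comm u q] at h2
    rw [dist_comm (W p q (1/2)) u] at htri
    have hprod : 0 < η s (dist p q / s) * s := mul_pos hηpos hs
    nlinarith [h2, htri, hm]
  -- Leuştean's lemma: uniform convexity for general λ, half case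
  have lemChalf : ∀ (r ε : ℝ) (a u v : X) (l : ℝ), 0 < r → ε ∈ Set.Ioc (0:ℝ) 2 →
      l ∈ Set.Icc (0:ℝ) 1 → l ≤ 1/2 → dist u a ≤ r → dist v a ≤ r → ε * r ≤ dist u v →
      dist (W u v l) a ≤ (1 - 2*l*(1-l) * η r ε) * r := by
    intro r ε a u v l hr hε hl hl2 hua hva hd
    have hηr := hη r ε hr hε
    rcases eq_or_lt_of_le hl.1 with h0 | h0
    · rw [← h0, w0]
      nlinarith [hηr.1]
    · have hD : 0 < dist u v := lt_of_lt_of_le (mul_pos hε.1 hr) hd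
      have h2l : (2*l) ∈ Set.Icc (0:ℝ) 1 := ⟨by linarith, by linarith⟩
      have hhalf : (1/2 : ℝ) ∈ Set.Icc (0:ℝ) 1 := by constructor <;> norm_num
      have hum : dist u (W u v (1/2)) = (1/2) * dist u v := wdx u v (1/2) hhalf
      have hmv : dist (W u v (1/2)) v = (1/2) * dist u v := by
        rw [wdy u v (1/2) hhalf]; ring
      have hup : dist u (W u (W u v (1/2)) (2*l)) = l * dist u v := by
        rw [wdx u (W u v (1/2)) (2*l) h2l, hum]; ring
      have hpm : dist (W u (W u v (1/2)) (2*l)) (W u v (1/2)) = (1 - 2*l) * ((1/2) * dist u v) := by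
        rw [wdy u (W u v (1/2)) (2*l) h2l, hum]
      have hpv : dist (W u (W u v (1/2)) (2*l)) v = dist u v - l * dist u v := by
        have t1 := dist_triangle (W u (W u v (1/2)) (2*l)) (W u v (1/2)) v
        have t2 := dist_triangle u (W u (W u v (1/2)) (2*l)) v
        have : dist (W u (W u v (1/2)) (2*l)) v ≤ dist u v - l * dist u v := by
          rw [hpm] at t1; rw [hmv] at t1; linarith
        have h2 : dist u v - l * dist u v ≤ dist (W u (W u v (1/2)) (2*l)) v := by
          rw [hup] at t2; linarith
        linarith
      have hz : dist u (W u v l) = l * dist u v := wdx u v l hl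
      have hzv : dist (W u v l) v = dist u v - l * dist u v := by
        rw [wdy u v l hl]; ring
      have hpz : W u (W u v (1/2)) (2*l) = W u v l :=
        uniq u v _ _ (l * dist u v) (mul_pos h0 hD) hup hz hpv hzv
      rw [← hpz]
      have hW1 := W1 u (W u v (1/2)) a (2*l) h2l
      rw [dist_comm a u, dist_comm a (W u v (1/2))] at hW1
      have hma : dist (W u v (1/2)) a ≤ (1 - η r ε) * r := hmod r ε a u v hr hε hua hva hd
      rw [dist_comm a (W u (W u v (1/2)) (2*l))] at hW1
      have e1 : (1-2*l) * dist u a ≤ (1-2*l) * r :=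
        mul_le_mul_of_nonneg_left hua (by linarith)
      have e2 : (2*l) * dist (W u v (1/2)) a ≤ (2*l) * ((1 - η r ε) * r) :=
        mul_le_mul_of_nonneg_left hma (by linarith)
      have e3 : 0 ≤ 2*l*l* η r ε * r :=
        mul_nonneg (mul_nonneg (mul_nonneg (by linarith : (0:ℝ) ≤ 2*l) h0.le) hηr.1.le) hr.le
      nlinarith [hW1, e1, e2, e3]
  have lemC : ∀ (r ε : ℝ) (a u v : X) (l : ℝ), 0 < r → ε ∈ Set.Ioc (0:ℝ) 2 →
      l ∈ Set.Icc (0:ℝ) 1 → dist u a ≤ r → dist v a ≤ r → ε * r ≤ dist u v →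
      dist (W u v l) a ≤ (1 - 2*l*(1-l) * η r ε) * r := by
    intro r ε a u v l hr hε hl hua hva hd
    rcases le_or_gt l (1/2) with h | h
    · exact lemChalf r ε a u v l hr hε hl h hua hva hd
    · rw [W3 u v l hl]
      have h1 := lemChalf r ε a v u (1-l) hr hε ⟨by linarith [hl.2], by linarith [hl.1]⟩
        (by linarith) hva hua (by rwa [dist_comm])
      calc dist (W v u (1-l)) a ≤ (1 - 2*(1-l)*(1-(1-l)) * η r ε) * r := h1
        _ = (1 - 2*l*(1-l) * η r ε) * r := by ring
  -- the sequence stays in C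
  have xC : ∀ n, xseq n ∈ C := by
    intro n
    induction n with
    | zero => rw [hx0]; exact hx
    | succ n ih => rw [hxs]; exact hconv _ ih _ (hT _ ih) _ (hlam n)
  -- displacement is non-increasing
  have dmono : ∀ n, dist (xseq (n+1)) (T (xseq (n+1))) ≤ dist (xseq n) (T (xseq n)) := by
    intro n
    have h1 : dist (xseq (n+1)) (T (xseq n)) = (1 - lam n) * dist (xseq n) (T (xseq n)) := by
      rw [hxs]; exact wdy _ _ _ (hlam n)
    have h2 : dist (xseq n) (xseq (n+1)) = lam n * dist (xseq n) (T (xseq n)) := by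
      conv_lhs => rw [hxs]
      exact wdx _ _ _ (hlam n)
    have h3 : dist (T (xseq n)) (T (xseq (n+1))) ≤ dist (xseq n) (xseq (n+1)) :=
      hTne _ (xC n) _ (xC (n+1))
    have h4 := dist_triangle (xseq (n+1)) (T (xseq n)) (T (xseq (n+1)))
    linarith
  have danti : Antitone (fun n => dist (xseq n) (T (xseq n))) :=
    antitone_nat_of_succ_le dmono
  -- the key quantitative statement
  have key : ∀ ε : ℝ, 0 < ε → ε < 2 * b →
      ∀ n : ℕ, θ ⌈(b + 1) / (ε * η (b + 1) (ε / (b + 1)))⌉₊ ≤ n →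
        dist (xseq n) (T (xseq n)) ≤ ε := by
    intro ε hε h2b n hn
    set η₀ := η (b + 1) (ε / (b + 1)) with hη₀def
    set K := ⌈(b + 1) / (ε * η₀)⌉₊ with hKdef
    set N := θ K with hNdef
    have hb1 : (0:ℝ) < b + 1 := by linarith
    have hε' : ε / (b+1) ∈ Set.Ioc (0:ℝ) 2 := ⟨by positivity, by rw [div_le_iff₀ hb1]; linarith⟩
    have hη₀pos := (hη (b+1) (ε/(b+1)) hb1 hε').1
    have hdN : dist (xseq N) (T (xseq N)) ≤ ε := by
      by_contra hgt
      push_neg at hgt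
      have hdn : ∀ k, k ≤ N → ε < dist (xseq k) (T (xseq k)) :=
        fun k hk => lt_of_lt_of_le hgt (danti hk)
      set δ : ℝ := 1 / (2 * ((N:ℝ) + 2)) with hδdef
      have hNnn : (0:ℝ) ≤ (N:ℝ) := Nat.cast_nonneg N
      have hδ : 0 < δ := by positivity
      have hδhalf : δ ≤ 1/2 := by
        rw [hδdef]
        rw [div_le_div_iff₀ (by positivity) (by norm_num)]
        linarith
      have hδ2 : ((N:ℝ) + 1) * δ ≤ 1/2 := by
        rw [hδdef, mul_one_div, div_le_div_iff₀ (by positivity) (by norm_num)]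
        linarith
      obtain ⟨y, hyC, hxy, hyT⟩ := happrox δ hδ
      have main : ∀ k, k ≤ N + 1 → dist (xseq k) y ≤
          b + (k:ℝ) * δ - ε * η₀ * ∑ j ∈ Finset.range k, lam j * (1 - lam j) := by
        intro k
        induction k with
        | zero => intro _; simpa [hx0] using hxy
        | succ k ih =>
          intro hk1
          have hkN : k ≤ N := by omega
          have hck := ih (by omega)
          have hSnn : 0 ≤ ∑ j ∈ Finset.range k, lam j * (1 - lam j) :=
            Finset.sum_nonneg (fun j _ => mul_nonneg (hlam j).1 (by linarith [(hlam j).2]))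
          have hkδ : (k:ℝ) * δ ≤ ((N:ℝ) + 1) * δ := by
            apply mul_le_mul_of_nonneg_right _ hδ.le
            have : (k:ℝ) ≤ (N:ℝ) := by exact_mod_cast hkN
            linarith
          have hckb : dist (xseq k) y ≤ b + 1/2 := by
            nlinarith [mul_nonneg (mul_nonneg hε.le hη₀pos.le) hSnn]
          have hrpos : 0 < dist (xseq k) y + δ := by
            have := dist_nonneg (x := xseq k) (y := y)
            linarith
          have hrb1 : dist (xseq k) y + δ ≤ b + 1 := by linarith
          have hTyd : dist (T (xseq k)) y ≤ dist (xseq k) y + δ := by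
            have t1 := dist_triangle (T (xseq k)) (T y) y
            have t2 := hTne _ (xC k) _ hyC
            have t3 : dist (T y) y = dist y (T y) := dist_comm _ _
            linarith
          have hεd : (ε/(b+1)) * (dist (xseq k) y + δ) ≤ dist (xseq k) (T (xseq k)) := by
            have h1 : (ε/(b+1)) * (dist (xseq k) y + δ) ≤ ε := by
              rw [div_mul_eq_mul_div, div_le_iff₀ hb1]
              nlinarith
            linarith [hdn k hkN]
          have hlc := lemC (dist (xseq k) y + δ) (ε/(b+1)) y (xseq k) (T (xseq k)) (lam k)
            hrpos hε' (hlam k) (by linarith) hTyd hεd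
          have hηge : η₀ ≤ η (dist (xseq k) y + δ) (ε/(b+1)) := by
            rw [hη₀def]
            exact hdec _ (b+1) _ hrpos hrb1 hε'
          have hd2r : ε ≤ 2 * (dist (xseq k) y + δ) := by
            have t1 := dist_triangle (xseq k) y (T (xseq k))
            have t2 : dist y (T (xseq k)) = dist (T (xseq k)) y := dist_comm _ _
            linarith [hdn k hkN]
          have hl0 := (hlam k).1
          have hl1 := (hlam k).2
          have hηrpos := (hη _ (ε/(b+1)) hrpos hε').1
          have hstep : dist (xseq (k+1)) y ≤
              dist (xseq k) y + δ - ε * η₀ * (lam k * (1 - lam k)) := by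
            rw [hxs]
            have hA : 0 ≤ 2 * lam k * (1 - lam k) := by nlinarith
            have hAη : 2 * lam k * (1 - lam k) * η₀ ≤
                2 * lam k * (1 - lam k) * η (dist (xseq k) y + δ) (ε/(b+1)) :=
              mul_le_mul_of_nonneg_left hηge hA
            have hBnn : 0 ≤ lam k * (1 - lam k) * η₀ := by nlinarith
            nlinarith [hlc, mul_le_mul_of_nonneg_right hAη hrpos.le,
              mul_le_mul_of_nonneg_left hd2r hBnn]
          have hsum : ∑ j ∈ Finset.range (k+1), lam j * (1 - lam j)
              = (∑ j ∈ Finset.range k, lam j * (1 - lam j)) + lam k * (1 - lam k) :=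
            Finset.sum_range_succ _ _
          rw [hsum]
          push_cast
          linarith
      have hfin := main (N+1) le_rfl
      have hKle : (b+1) / (ε * η₀) ≤ (K:ℝ) := Nat.le_ceil _
      have hKS : (K:ℝ) ≤ ∑ j ∈ Finset.range (N+1), lam j * (1 - lam j) := hθ K
      have hprod : 0 < ε * η₀ := mul_pos hε hη₀pos
      have hb1S : b + 1 ≤ ε * η₀ * ∑ j ∈ Finset.range (N+1), lam j * (1 - lam j) := by
        have h1 : b + 1 ≤ ε * η₀ * (K:ℝ) := by
          have h2 := mul_le_mul_of_nonneg_left hKle hprod.le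
          rw [mul_div_cancel₀ _ (ne_of_gt hprod)] at h2
          linarith
        nlinarith [mul_le_mul_of_nonneg_left hKS hprod.le]
      have hge0 : (0:ℝ) ≤ dist (xseq (N+1)) y := dist_nonneg
      push_cast at hfin
      linarith
    exact le_trans (danti hn) hdN
  -- the trivial bound for ε ≥ 2b
  have part3 : ∀ ε : ℝ, 2*b ≤ ε → ∀ n, dist (xseq n) (T (xseq n)) ≤ ε := by
    intro ε hε n
    have h0 : dist (xseq 0) (T (xseq 0)) ≤ 2*b := by
      rw [hx0]
      apply le_of_forall_pos_le_add
      intro δ hδ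
      obtain ⟨y, hyC, hxy, hyT⟩ := happrox δ hδ
      have t1 := dist_triangle4 x y (T y) (T x)
      have t2 := hTne _ hyC _ hx
      have t3 : dist y x = dist x y := dist_comm _ _
      linarith
    linarith [danti (Nat.zero_le n), h0, hε]
  refine ⟨?_, key, part3⟩
  rw [Metric.tendsto_atTop]
  intro ε hε
  have hε₀pos : 0 < min (ε/2) b := lt_min (by linarith) hb
  have hε₀2b : min (ε/2) b < 2*b := lt_of_le_of_lt (min_le_right _ _) (by linarith)
  refine ⟨θ ⌈(b+1)/((min (ε/2) b) * η (b+1) ((min (ε/2) b)/(b+1)))⌉₊, fun n hn => ?_⟩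
  have hk := key (min (ε/2) b) hε₀pos hε₀2b n hn
  rw [Real.dist_eq, sub_zero, abs_of_nonneg dist_nonneg]
  have : min (ε/2) b ≤ ε/2 := min_le_left _ _
  linarith
end

section
/- Let (X,ρ,W) be a uniformly convex hyperbolic space with modulus η non-increasing in r, admitting a factorization η(r,ε) = ε·η̃(r,ε) with η̃ non-decreasing in ε. Under the hypotheses of the main asymptotic regularity theorem (x ∈ C, b > 0 with approximate fixed points y in the b-ball around x, witness θ for ∑λ_k(1−λ_k)), for every 0 < ε < 2b and all n ≥ θ(⌈(b+1)/(2ε·η̃(b+1, ε/(b+1)))⌉), one has ρ(x_n, T x_n) ≤ ε. -/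
set_option maxHeartbeats 2000000 in
theorem stmt_12
    {X : Type*} [MetricSpace X]
    (W : X → X → ℝ → X)
    (W1 : ∀ x y z : X, ∀ l : ℝ, l ∈ Set.Icc (0:ℝ) 1 →
      dist z (W x y l) ≤ (1 - l) * dist z x + l * dist z y)
    (W2 : ∀ x y : X, ∀ l l' : ℝ, l ∈ Set.Icc (0:ℝ) 1 → l' ∈ Set.Icc (0:ℝ) 1 →
      dist (W x y l) (W x y l') = |l - l'| * dist x y)
    (W3 : ∀ x y : X, ∀ l : ℝ, l ∈ Set.Icc (0:ℝ) 1 → W x y l = W y x (1 - l))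
    (W4 : ∀ x y z w : X, ∀ l : ℝ, l ∈ Set.Icc (0:ℝ) 1 →
      dist (W x z l) (W y w l) ≤ (1 - l) * dist x y + l * dist z w)
    (η : ℝ → ℝ → ℝ)
    (hη : ∀ r ε : ℝ, 0 < r → ε ∈ Set.Ioc (0:ℝ) 2 → η r ε ∈ Set.Ioc (0:ℝ) 1)
    (hmod : ∀ r ε : ℝ, ∀ a u v : X, 0 < r → ε ∈ Set.Ioc (0:ℝ) 2 →
      dist u a ≤ r → dist v a ≤ r → ε * r ≤ dist u v →
      dist (W u v (1/2)) a ≤ (1 - η r ε) * r)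
    (hdec : ∀ r s ε : ℝ, 0 < r → r ≤ s → ε ∈ Set.Ioc (0:ℝ) 2 → η s ε ≤ η r ε)
    (ηt : ℝ → ℝ → ℝ)
    (hfact : ∀ r ε : ℝ, 0 < r → ε ∈ Set.Ioc (0:ℝ) 2 → η r ε = ε * ηt r ε)
    (hinc : ∀ r ε ε' : ℝ, 0 < r → ε ∈ Set.Ioc (0:ℝ) 2 → ε' ∈ Set.Ioc (0:ℝ) 2 →
      ε ≤ ε' → ηt r ε ≤ ηt r ε')
    (C : Set X) (hCne : C.Nonempty)
    (hconv : ∀ u ∈ C, ∀ v ∈ C, ∀ l : ℝ, l ∈ Set.Icc (0:ℝ) 1 → W u v l ∈ C)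
    (T : X → X) (hT : ∀ u ∈ C, T u ∈ C)
    (hTne : ∀ u ∈ C, ∀ v ∈ C, dist (T u) (T v) ≤ dist u v)
    (lam : ℕ → ℝ) (hlam : ∀ n, lam n ∈ Set.Icc (0:ℝ) 1)
    (x : X) (hx : x ∈ C)
    (xseq : ℕ → X) (hx0 : xseq 0 = x)
    (hxs : ∀ n, xseq (n + 1) = W (xseq n) (T (xseq n)) (lam n))
    (θ : ℕ → ℕ)
    (hθ : ∀ n : ℕ, (n : ℝ) ≤ ∑ k ∈ Finset.range (θ n + 1), lam k * (1 - lam k))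
    (b : ℝ) (hb : 0 < b)
    (happrox : ∀ δ : ℝ, 0 < δ → ∃ y ∈ C, dist x y ≤ b ∧ dist y (T y) < δ)
    : ∀ ε : ℝ, 0 < ε → ε < 2 * b →
      ∀ n : ℕ, θ ⌈(b + 1) / (2 * ε * ηt (b + 1) (ε / (b + 1)))⌉₊ ≤ n →
        dist (xseq n) (T (xseq n)) ≤ ε := by
  -- basic identities
  have h0 : ∀ x y : X, W x y 0 = x := by
    intro x y
    have h := W1 x y x 0 ⟨le_refl 0, zero_le_one⟩
    simp only [sub_zero, one_mul, dist_self, zero_mul, add_zero] at h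
    exact (dist_le_zero.mp h).symm
  have h1 : ∀ x y : X, W x y 1 = y := by
    intro x y
    have h := W1 x y y 1 ⟨zero_le_one, le_refl 1⟩
    simp only [sub_self, zero_mul, one_mul, dist_self, zero_add] at h
    exact (dist_le_zero.mp h).symm
  have hd0 : ∀ (x y : X) (l : ℝ), l ∈ Set.Icc (0:ℝ) 1 → dist (W x y l) x = l * dist x y := by
    intro x y l hl
    have h := W2 x y l 0 hl ⟨le_refl 0, zero_le_one⟩
    rw [h0 x y] at h
    rwa [sub_zero, abs_of_nonneg hl.1] at h
  have hd1 : ∀ (x y : X) (l : ℝ), l ∈ Set.Icc (0:ℝ) 1 →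
      dist (W x y l) y = (1 - l) * dist x y := by
    intro x y l hl
    have h := W2 x y l 1 hl ⟨zero_le_one, le_refl 1⟩
    rw [h1 x y] at h
    rw [abs_of_nonpos (by linarith [hl.2] : l - 1 ≤ 0), neg_sub] at h
    exact h
  -- general lambda uniform convexity, first for l ≤ 1/2
  have key2 : ∀ (r e : ℝ) (a u v : X) (l : ℝ), 0 < r → e ∈ Set.Ioc (0:ℝ) 2 →
      dist u a ≤ r → dist v a ≤ r → e * r ≤ dist u v → 0 ≤ l → l ≤ 1/2 →
      dist (W u v l) a ≤ (1 - 2*l*(1-l)*η r e) * r := by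
    intro r e a u v l hr he hu hv huv hl0 hl2
    have hη' := hη r e hr he
    rcases eq_or_lt_of_le hl0 with h|hlpos
    · rw [← h, h0]
      have : (1 - 2*0*(1-0)*η r e) * r = r := by ring
      rw [this]; exact hu
    · have hl1 : l ∈ Set.Icc (0:ℝ) 1 := ⟨hl0, by linarith⟩
      have h2l : 2*l ∈ Set.Icc (0:ℝ) 1 := ⟨by linarith, by linarith⟩
      have hhalf : (1/2:ℝ) ∈ Set.Icc (0:ℝ) 1 := by norm_num
      have hd : 0 < dist u v := lt_of_lt_of_le (mul_pos he.1 hr) huv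
      set d := dist u v with hdd
      set m := W u v (1/2) with hmdef
      set p := W u v l with hpdef
      set q := W u m (2*l) with hqdef
      have hpu : dist p u = l * d := hd0 u v l hl1
      have hpv : dist p v = (1-l) * d := hd1 u v l hl1
      have hmu : dist m u = (1/2) * d := hd0 u v (1/2) hhalf
      have hmv : dist m v = (1-1/2) * d := hd1 u v (1/2) hhalf
      have hum : dist u m = (1/2) * d := by rw [dist_comm]; exact hmu
      have hqu : dist q u = (2*l) * ((1/2)*d) := by
        rw [hd0 u m (2*l) h2l, hum]
      have hqm : dist q m = (1-2*l) * ((1/2)*d) := by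
        rw [hd1 u m (2*l) h2l, hum]
      -- p = q
      have hpq : p = q := by
        by_contra hne
        have hs : 0 < dist p q := dist_pos.mpr hne
        set s := dist p q with hsdef
        have hr1 : 0 < l * d := mul_pos hlpos hd
        have hqu' : dist q u ≤ l * d := le_of_eq (by rw [hqu]; ring)
        have hs2 : s ≤ 2 * (l*d) := by
          have := dist_triangle p u q
          rw [hpu, dist_comm u q] at this
          have h2 : dist q u = l * d := by rw [hqu]; ring
          rw [hsdef]; linarith [this, h2.le, h2.ge]
        have he1 : s/(l*d) ∈ Set.Ioc (0:ℝ) 2 :=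
          ⟨div_pos hs hr1, by rw [div_le_iff₀ hr1]; linarith⟩
        have hmid_u := hmod (l*d) (s/(l*d)) u p q hr1 he1 (le_of_eq hpu) hqu'
          (by rw [div_mul_cancel₀ _ (ne_of_gt hr1)])
        have hηu := hη (l*d) (s/(l*d)) hr1 he1
        have hlt1 : l < 1 := by linarith
        have hr2 : 0 < (1-l) * d := mul_pos (by linarith) hd
        have hqv : dist q v ≤ (1-l) * d := by
          have := dist_triangle q m v
          rw [hqm, hmv] at this
          linarith [this]
        have hs2' : s ≤ 2 * ((1-l)*d) := by
          have := dist_triangle p v q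
          rw [hpv, dist_comm v q] at this
          rw [hsdef]; linarith [this, hqv]
        have he2 : s/((1-l)*d) ∈ Set.Ioc (0:ℝ) 2 :=
          ⟨div_pos hs hr2, by rw [div_le_iff₀ hr2]; linarith⟩
        have hmid_v := hmod ((1-l)*d) (s/((1-l)*d)) v p q hr2 he2 (le_of_eq hpv) hqv
          (by rw [div_mul_cancel₀ _ (ne_of_gt hr2)])
        have hηv := hη ((1-l)*d) (s/((1-l)*d)) hr2 he2
        have htri := dist_triangle u (W p q (1/2)) v
        rw [dist_comm u (W p q (1/2))] at htri
        have b1 : dist (W p q (1/2)) u < l * d :=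
          lt_of_le_of_lt hmid_u (by nlinarith [mul_pos hηu.1 hr1])
        have b2 : dist (W p q (1/2)) v < (1-l) * d :=
          lt_of_le_of_lt hmid_v (by nlinarith [mul_pos hηv.1 hr2])
        rw [← hdd] at htri
        have hsplit : l*d + (1-l)*d = d := by ring
        linarith
      -- conclude
      have hW1q := W1 u m a (2*l) h2l
      have hmid := hmod r e a u v hr he hu hv huv
      rw [← hmdef] at hmid
      calc dist p a = dist a q := by rw [hpq, dist_comm]
        _ ≤ (1-2*l) * dist a u + 2*l * dist a m := hW1q
        _ ≤ (1-2*l) * r + 2*l * ((1 - η r e) * r) := by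
            rw [dist_comm a u, dist_comm a m]
            gcongr <;> linarith
        _ ≤ (1 - 2*l*(1-l)*η r e) * r := by
            nlinarith [mul_nonneg (mul_nonneg (mul_nonneg hl0 hl0) hη'.1.le) hr.le]
  have key : ∀ (r e : ℝ) (a u v : X) (l : ℝ), 0 < r → e ∈ Set.Ioc (0:ℝ) 2 →
      dist u a ≤ r → dist v a ≤ r → e * r ≤ dist u v → l ∈ Set.Icc (0:ℝ) 1 →
      dist (W u v l) a ≤ (1 - 2*l*(1-l)*η r e) * r := by
    intro r e a u v l hr he hu hv huv hl
    rcases le_or_gt l (1/2) with h|h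
    · exact key2 r e a u v l hr he hu hv huv hl.1 h
    · rw [W3 u v l hl]
      have := key2 r e a v u (1-l) hr he hv hu (by rwa [dist_comm]) (by linarith [hl.2])
        (by linarith)
      calc dist (W v u (1-l)) a ≤ (1 - 2*(1-l)*(1-(1-l))*η r e) * r := this
        _ = (1 - 2*l*(1-l)*η r e) * r := by ring
  -- membership
  have hxC : ∀ n, xseq n ∈ C := by
    intro n
    induction n with
    | zero => rw [hx0]; exact hx
    | succ k ih => rw [hxs]; exact hconv _ ih _ (hT _ ih) _ (hlam k)
  -- monotonicity of dist(x_n, T x_n)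
  have hmono : ∀ n, dist (xseq (n+1)) (T (xseq (n+1))) ≤ dist (xseq n) (T (xseq n)) := by
    intro n
    have h1 : dist (xseq (n+1)) (T (xseq n)) = (1 - lam n) * dist (xseq n) (T (xseq n)) := by
      rw [hxs]; exact hd1 _ _ _ (hlam n)
    have h2 : dist (xseq n) (xseq (n+1)) = lam n * dist (xseq n) (T (xseq n)) := by
      rw [hxs, dist_comm]; exact hd0 _ _ _ (hlam n)
    have h3 := hTne _ (hxC n) _ (hxC (n+1))
    have h4 := dist_triangle (xseq (n+1)) (T (xseq n)) (T (xseq (n+1)))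
    linarith
  have hmono' : ∀ m n, m ≤ n → dist (xseq n) (T (xseq n)) ≤ dist (xseq m) (T (xseq m)) := by
    intro m n hmn
    induction n, hmn using Nat.le_induction with
    | base => exact le_refl _
    | succ k hk ih => exact le_trans (hmono k) ih
  -- main argument
  intro ε hε hε2 n hn
  have hb1 : (0:ℝ) < b + 1 := by linarith
  set ε0 := ε / (b+1) with hε0def
  have hε0 : ε0 ∈ Set.Ioc (0:ℝ) 2 := ⟨div_pos hε hb1, by rw [div_le_iff₀ hb1]; linarith⟩
  have hηt_pos : 0 < ηt (b+1) ε0 := by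
    have h1 := (hη (b+1) ε0 hb1 hε0).1
    have h2 := hfact (b+1) ε0 hb1 hε0
    by_contra hcon
    push_neg at hcon
    nlinarith [hε0.1]
  set c := 2 * ε * ηt (b+1) ε0 with hcdef
  have hc : 0 < c := by
    have : (0:ℝ) < 2 * ε := by linarith
    exact mul_pos this hηt_pos
  set K := ⌈(b + 1) / c⌉₊ with hKdef
  set N := θ K with hNdef
  suffices hex : ∃ m ≤ N, dist (xseq m) (T (xseq m)) ≤ ε by
    obtain ⟨m, hm, hm2⟩ := hex
    exact le_trans (hmono' m n (le_trans hm hn)) hm2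
  by_contra hcon
  push_neg at hcon
  set δ := 1 / (2*((N:ℝ)+1)) with hδdef
  have hδ : 0 < δ := by positivity
  obtain ⟨y, hyC, hxy, hyT⟩ := happrox δ hδ
  have hty : ∀ m, dist y (T (xseq m)) ≤ dist (xseq m) y + δ := by
    intro m
    have h1 := dist_triangle y (T y) (T (xseq m))
    have h2 := hTne y hyC _ (hxC m)
    rw [dist_comm y (xseq m)] at h2
    linarith
  have hstep0 : ∀ m, dist (xseq (m+1)) y ≤ dist (xseq m) y + δ := by
    intro m
    have hw := W1 (xseq m) (T (xseq m)) y (lam m) (hlam m)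
    have h2 := hty m
    have hl := hlam m
    rw [hxs, dist_comm]
    rw [dist_comm y (xseq m)] at hw
    nlinarith [hl.1, hl.2, hδ, dist_nonneg (x := xseq m) (y := y)]
  have hbound : ∀ m, dist (xseq m) y ≤ b + m * δ := by
    intro m
    induction m with
    | zero => rw [hx0]; simpa using hxy
    | succ k ih =>
        have := hstep0 k
        push_cast
        push_cast at ih
        linarith
  have hmδ : ∀ m : ℕ, m ≤ N → ((m:ℝ)+1) * δ ≤ 1/2 := by
    intro m hm
    have hm' : ((m:ℝ)+1) ≤ (N:ℝ)+1 := by exact_mod_cast Nat.succ_le_succ hm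
    rw [hδdef, mul_one_div, div_le_iff₀ (by positivity : (0:ℝ) < 2*((N:ℝ)+1))]
    nlinarith [hm', Nat.cast_nonneg (α := ℝ) m]
  -- decrement step
  have hdecr : ∀ m, m ≤ N →
      dist (xseq (m+1)) y ≤ dist (xseq m) y + δ - c * (lam m * (1 - lam m)) := by
    intro m hm
    set R := dist (xseq m) y with hRdef
    set s := R + δ with hsdef
    set dm := dist (xseq m) (T (xseq m)) with hdmdef
    have hdm : ε < dm := hcon m hm
    have hR0 : 0 ≤ R := dist_nonneg
    have hs_pos : 0 < s := by rw [hsdef]; linarith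
    have hs_le : s ≤ b + 1 := by
      have hb' := hbound m
      have h2 := hmδ m hm
      have : R + δ ≤ b + ((m:ℝ)+1)*δ := by rw [hRdef] at *; nlinarith [hb']
      rw [hsdef]; linarith
    set em := dm / s with hemdef
    have hdm0 : 0 < dm := lt_trans hε hdm
    have htym := hty m
    have hdm2s : dm ≤ 2 * s := by
      have := dist_triangle (xseq m) y (T (xseq m))
      rw [hsdef]; rw [hdmdef]; rw [hRdef] at *; linarith
    have hem : em ∈ Set.Ioc (0:ℝ) 2 := by
      constructor
      · exact div_pos hdm0 hs_pos
      · rw [hemdef, div_le_iff₀ hs_pos]; linarith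
    have hA : em * s = dm := div_mul_cancel₀ dm (ne_of_gt hs_pos)
    have hk := key s em y (xseq m) (T (xseq m)) (lam m) hs_pos hem
      (by rw [hsdef]; linarith) (by rw [dist_comm, hsdef]; linarith [htym])
      (le_of_eq hA) (hlam m)
    have hmon := hdec s (b+1) em hs_pos hs_le hem
    have hfa := hfact (b+1) em hb1 hem
    have hε0em : ε0 ≤ em := by
      rw [hε0def, hemdef, div_le_div_iff₀ hb1 hs_pos]
      nlinarith
    have hin := hinc (b+1) ε0 em hb1 hε0 hem hε0em
    have hηt_em : 0 < ηt (b+1) em := by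
      have h1 := (hη (b+1) em hb1 hem).1
      by_contra hco
      push_neg at hco
      nlinarith [hem.1]
    have hl := hlam m
    have hll : 0 ≤ lam m * (1 - lam m) := mul_nonneg hl.1 (by linarith [hl.2])
    have t1 : ε * ηt (b+1) ε0 ≤ ε * ηt (b+1) em := by nlinarith
    have t2 : ε * ηt (b+1) em ≤ dm * ηt (b+1) em := by nlinarith
    have t3 : dm * ηt (b+1) em = η (b+1) em * s := by rw [hfa, ← hA]; ring
    have t4 : η (b+1) em * s ≤ η s em * s := by nlinarith
    have t5 : ε * ηt (b+1) ε0 ≤ η s em * s := by linarith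
    have hkey2 : c * (lam m * (1 - lam m)) ≤ 2 * lam m * (1 - lam m) * η s em * s := by
      have := mul_le_mul_of_nonneg_left t5 hll
      calc c * (lam m * (1 - lam m)) = (lam m * (1 - lam m)) * (ε * ηt (b+1) ε0) * 2 := by
            rw [hcdef]; ring
        _ ≤ (lam m * (1 - lam m)) * (η s em * s) * 2 := by nlinarith
        _ = 2 * lam m * (1 - lam m) * η s em * s := by ring
    have hfin : dist (xseq (m+1)) y ≤ (1 - 2 * lam m * (1 - lam m) * η s em) * s := by
      rw [hxs]; exact hk
    calc dist (xseq (m+1)) y ≤ (1 - 2 * lam m * (1 - lam m) * η s em) * s := hfin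
      _ = s - 2 * lam m * (1 - lam m) * η s em * s := by ring
      _ ≤ s - c * (lam m * (1 - lam m)) := by linarith
      _ = dist (xseq m) y + δ - c * (lam m * (1 - lam m)) := by rw [hsdef, hRdef]
  -- telescoping
  have htel : ∀ m, m ≤ N + 1 →
      dist (xseq m) y ≤ b + m * δ - c * ∑ k ∈ Finset.range m, lam k * (1 - lam k) := by
    intro m hm
    induction m with
    | zero => simp only [Finset.range_zero, Finset.sum_empty, Nat.cast_zero, zero_mul,
        mul_zero, add_zero, sub_zero]; rw [hx0]; exact hxy
    | succ k ih =>
        have hk' : k ≤ N := by omega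
        have ihh := ih (by omega)
        have hd := hdecr k hk'
        rw [Finset.sum_range_succ]
        push_cast
        push_cast at ihh
        linarith
  have hKge : (b+1)/c ≤ (K:ℝ) := Nat.le_ceil _
  have hKc : b + 1 ≤ c * K := by
    rw [div_le_iff₀ hc] at hKge
    linarith [hKge]
  have hsum : (K:ℝ) ≤ ∑ k ∈ Finset.range (N+1), lam k * (1 - lam k) := hθ K
  have hfin := htel (N+1) le_rfl
  have hNδ : ((N:ℝ)+1) * δ = 1/2 := by
    have hN0 : ((N:ℝ)+1) ≠ 0 := by positivity
    rw [hδdef]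
    field_simp
  have hcsum : c * (K:ℝ) ≤ c * ∑ k ∈ Finset.range (N+1), lam k * (1 - lam k) :=
    mul_le_mul_of_nonneg_left hsum hc.le
  have hd0' : (0:ℝ) ≤ dist (xseq (N+1)) y := dist_nonneg
  push_cast at hfin
  linarith
end

section
/- Groetsch's theorem for hyperbolic spaces: Let (X,ρ,W) be a uniformly convex hyperbolic space, C ⊆ X nonempty convex, T : C → C nonexpansive with at least one fixed point, and (λ_n) ⊆ [0,1] with ∑_{n=0}^∞ λ_n(1−λ_n) = ∞. Then for every x ∈ C, the Krasnoselski–Mann iteration (x_n) satisfies lim_{n→∞} ρ(x_n, T x_n) = 0. -/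
/-!
Along the Krasnoselski–Mann iteration both the distance `dₙ = ρ(xₙ, p)` to a fixed point `p`
and the displacement `ρ(xₙ, T xₙ)` are nonincreasing. If the displacement stayed above some
`a > 0`, then, once `dₙ` is within `a/4` of its limit `L ≥ a/2`, both `xₙ` and `T xₙ` can be
pulled into the closed ball of radius `L` about `p` while staying `a/2` apart. Uniform convexity
at the single radius `L` (so no monotonicity of `η` is needed) then gives
`d_{n+1} ≤ dₙ - c λₙ(1 - λₙ)` for a fixed `c > 0`, and summing contradicts
`∑ λₙ(1 - λₙ) = ∞`.
-/

open Filter Set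

section

variable {X : Type*}

lemma km_mem {W : X → X → ℝ → X} {T : X → X} {lam : ℕ → ℝ} {xs : ℕ → X} {C : Set X}
    (hconv : ∀ u ∈ C, ∀ v ∈ C, ∀ l : ℝ, l ∈ Icc (0:ℝ) 1 → W u v l ∈ C)
    (hT : MapsTo T C C) (hlam : ∀ n, lam n ∈ Icc (0:ℝ) 1)
    (hxs : ∀ n, xs (n + 1) = W (xs n) (T (xs n)) (lam n)) (h0 : xs 0 ∈ C) (n : ℕ) : xs n ∈ C := by
  induction n with
  | zero => exact h0
  | succ n ih => rw [hxs]; exact hconv _ ih _ (hT ih) _ (hlam n)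

variable [MetricSpace X]

-- The axioms (W1), (W2), (W3), (W4) and uniform convexity with modulus `η`, in this order.
def DistConvex (W : X → X → ℝ → X) : Prop :=
  ∀ x y z : X, ∀ l : ℝ, l ∈ Icc (0:ℝ) 1 → dist z (W x y l) ≤ (1 - l) * dist z x + l * dist z y

def SegmentIsometric (W : X → X → ℝ → X) : Prop :=
  ∀ x y : X, ∀ l l' : ℝ, l ∈ Icc (0:ℝ) 1 → l' ∈ Icc (0:ℝ) 1 →
    dist (W x y l) (W x y l') = |l - l'| * dist x y

def CombSymm (W : X → X → ℝ → X) : Prop :=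
  ∀ x y : X, ∀ l : ℝ, l ∈ Icc (0:ℝ) 1 → W x y l = W y x (1 - l)

def MetricConvex (W : X → X → ℝ → X) : Prop :=
  ∀ x y z w : X, ∀ l : ℝ, l ∈ Icc (0:ℝ) 1 →
    dist (W x z l) (W y w l) ≤ (1 - l) * dist x y + l * dist z w

def UniformlyConvexWith (W : X → X → ℝ → X) (η : ℝ → ℝ → ℝ) : Prop :=
  ∀ r ε : ℝ, ∀ a u v : X, 0 < r → ε ∈ Ioc (0:ℝ) 2 →
    dist u a ≤ r → dist v a ≤ r → ε * r ≤ dist u v → dist (W u v (1/2)) a ≤ (1 - η r ε) * r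

section Hyperbolic

variable {W : X → X → ℝ → X} {η : ℝ → ℝ → ℝ}

lemma comb_zero (hW1 : DistConvex W) (x y : X) : W x y 0 = x := by
  have h := hW1 x y x 0 (by norm_num)
  simp only [sub_zero, one_mul, dist_self, zero_mul, add_zero] at h
  exact (dist_le_zero.mp h).symm

lemma comb_one (hW1 : DistConvex W) (x y : X) : W x y 1 = y := by
  have h := hW1 x y y 1 (by norm_num)
  simp only [sub_self, zero_mul, one_mul, dist_self, zero_add] at h
  exact (dist_le_zero.mp h).symm

lemma dist_comb_left (hW1 : DistConvex W) (hW2 : SegmentIsometric W) {l : ℝ}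
    (hl : l ∈ Icc (0:ℝ) 1) (x y : X) : dist (W x y l) x = l * dist x y := by
  have h := hW2 x y l 0 hl (by norm_num)
  rwa [comb_zero hW1, sub_zero, abs_of_nonneg hl.1] at h

lemma dist_comb_right (hW1 : DistConvex W) (hW2 : SegmentIsometric W) {l : ℝ}
    (hl : l ∈ Icc (0:ℝ) 1) (x y : X) : dist (W x y l) y = (1 - l) * dist x y := by
  have h := hW2 x y l 1 hl (by norm_num)
  rwa [comb_one hW1, abs_sub_comm, abs_of_nonneg (by linarith [hl.2])] at h

lemma dist_midpoint_lt (hη : ∀ r ε, 0 < r → ε ∈ Ioc (0:ℝ) 2 → 0 < η r ε)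
    (hmod : UniformlyConvexWith W η) {a u v : X} {r : ℝ} (hu : dist u a ≤ r) (hv : dist v a ≤ r)
    (huv : u ≠ v) : dist (W u v (1/2)) a < r := by
  have hpos : 0 < dist u v := dist_pos.mpr huv
  have hr : 0 < r := by linarith [dist_triangle_right u v a]
  have hε : dist u v / r ∈ Ioc (0:ℝ) 2 :=
    ⟨div_pos hpos hr, (div_le_iff₀ hr).mpr (by linarith [dist_triangle_right u v a])⟩
  calc dist (W u v (1/2)) a ≤ (1 - η r (dist u v / r)) * r :=
        hmod r _ a u v hr hε hu hv (div_mul_cancel₀ _ hr.ne').le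
    _ < r := by nlinarith [hη r _ hr hε]

lemma eq_of_dist_le_of_add_le_dist (hη : ∀ r ε, 0 < r → ε ∈ Ioc (0:ℝ) 2 → 0 < η r ε)
    (hmod : UniformlyConvexWith W η) {x m p₁ p₂ : X} {α β : ℝ}
    (h₁x : dist p₁ x ≤ α) (h₂x : dist p₂ x ≤ α) (h₁m : dist p₁ m ≤ β) (h₂m : dist p₂ m ≤ β)
    (hαβ : α + β ≤ dist x m) : p₁ = p₂ := by
  by_contra hne
  have hx := dist_midpoint_lt hη hmod h₁x h₂x hne
  have hm := dist_midpoint_lt hη hmod h₁m h₂m hne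
  linarith [dist_triangle_left x m (W p₁ p₂ (1/2))]

-- Both sides lie at distance `l ρ(x,y)` from `x` and `(1/2 - l) ρ(x,y)` from the midpoint.
lemma comb_eq_comb_midpoint (hW1 : DistConvex W) (hW2 : SegmentIsometric W)
    (hη : ∀ r ε, 0 < r → ε ∈ Ioc (0:ℝ) 2 → 0 < η r ε) (hmod : UniformlyConvexWith W η)
    (x y : X) {l : ℝ} (h0 : 0 ≤ l) (hl : l ≤ 1/2) :
    W x y l = W x (W x y (1/2)) (2 * l) := by
  have hl₁ : l ∈ Icc (0:ℝ) 1 := ⟨h0, by linarith⟩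
  have hl₂ : 2 * l ∈ Icc (0:ℝ) 1 := ⟨by linarith, by linarith⟩
  have hhalf : (1/2 : ℝ) ∈ Icc (0:ℝ) 1 := by norm_num
  have hxm : dist x (W x y (1/2)) = 1/2 * dist x y := by
    rw [dist_comm]; exact dist_comb_left hW1 hW2 hhalf x y
  refine eq_of_dist_le_of_add_le_dist hη hmod (x := x) (m := W x y (1/2))
    (α := l * dist x y) (β := (1/2 - l) * dist x y) ?_ ?_ ?_ ?_ ?_
  · exact (dist_comb_left hW1 hW2 hl₁ x y).le
  · rw [dist_comb_left hW1 hW2 hl₂, hxm]; linarith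
  · rw [hW2 x y l (1/2) hl₁ hhalf, abs_of_nonpos (by linarith)]; linarith
  · rw [dist_comb_right hW1 hW2 hl₂, hxm]; linarith
  · rw [hxm]; linarith

lemma dist_comb_le_of_le_half (hW1 : DistConvex W) (hW2 : SegmentIsometric W)
    (hη : ∀ r ε, 0 < r → ε ∈ Ioc (0:ℝ) 2 → 0 < η r ε) (hmod : UniformlyConvexWith W η)
    {u v p : X} {l D c : ℝ} (h0 : 0 ≤ l) (hl : l ≤ 1/2) (hu : dist u p ≤ D)
    (hmid : dist (W u v (1/2)) p ≤ D - c) : dist (W u v l) p ≤ D - 2 * l * c := by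
  rw [comb_eq_comb_midpoint hW1 hW2 hη hmod u v h0 hl, dist_comm]
  calc dist p (W u (W u v (1/2)) (2 * l))
      ≤ (1 - 2 * l) * dist p u + 2 * l * dist p (W u v (1/2)) :=
        hW1 _ _ _ _ ⟨by linarith, by linarith⟩
    _ ≤ (1 - 2 * l) * D + 2 * l * (D - c) := by
        rw [dist_comm p, dist_comm p]
        exact add_le_add (mul_le_mul_of_nonneg_left hu (by linarith))
          (mul_le_mul_of_nonneg_left hmid (by linarith))
    _ = D - 2 * l * c := by ring

lemma dist_comb_le (hW1 : DistConvex W) (hW2 : SegmentIsometric W) (hW3 : CombSymm W)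
    (hη : ∀ r ε, 0 < r → ε ∈ Ioc (0:ℝ) 2 → 0 < η r ε) (hmod : UniformlyConvexWith W η)
    {u v p : X} {l D c : ℝ} (hl : l ∈ Icc (0:ℝ) 1) (hc : 0 ≤ c) (hu : dist u p ≤ D)
    (hv : dist v p ≤ D) (hmid : dist (W u v (1/2)) p ≤ D - c) :
    dist (W u v l) p ≤ D - 2 * (l * (1 - l)) * c := by
  rcases le_or_gt l (1/2) with h | h
  · have := dist_comb_le_of_le_half hW1 hW2 hη hmod hl.1 h hu hmid
    nlinarith [mul_nonneg (mul_nonneg hl.1 hl.1) hc]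
  · rw [hW3 u v (1/2) (by norm_num), show (1:ℝ) - 1/2 = 1/2 by norm_num] at hmid
    rw [hW3 u v l hl]
    have := dist_comb_le_of_le_half hW1 hW2 hη hmod (l := 1 - l) (by linarith [hl.2])
      (by linarith) hv hmid
    nlinarith [mul_nonneg (mul_nonneg (sub_nonneg.mpr hl.2) (sub_nonneg.mpr hl.2)) hc]

lemma exists_dist_le_sub (hW1 : DistConvex W) (hW2 : SegmentIsometric W) {z p : X} {L D : ℝ}
    (hL : 0 ≤ L) (hLD : L ≤ D) (hz : dist z p ≤ D) :
    ∃ u, dist u p ≤ L ∧ dist z u ≤ D - L := by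
  rcases le_or_gt (dist z p) L with h | h
  · exact ⟨z, h, by simpa using hLD⟩
  · have hd : 0 < dist z p := hL.trans_lt h
    have ht : L / dist z p ∈ Icc (0:ℝ) 1 := ⟨div_nonneg hL hd.le, (div_le_one hd).mpr h.le⟩
    refine ⟨W p z (L / dist z p), ?_, ?_⟩
    · rw [dist_comb_left hW1 hW2 ht, dist_comm p z, div_mul_cancel₀ _ hd.ne']
    · rw [dist_comm, dist_comb_right hW1 hW2 ht, dist_comm p z, sub_mul, one_mul,
        div_mul_cancel₀ _ hd.ne']
      linarith

-- Pull `y` and `q` into the ball of radius `L`, use uniform convexity there, and return by (W4).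
lemma dist_midpoint_le_sub (hW1 : DistConvex W) (hW2 : SegmentIsometric W) (hW4 : MetricConvex W)
    (hmod : UniformlyConvexWith W η) {y q p : X} {L D ε : ℝ} (hL : 0 < L)
    (hε : ε ∈ Ioc (0:ℝ) 2) (hLD : L ≤ D) (hy : dist y p ≤ D) (hq : dist q p ≤ D)
    (hyq : ε * L + 2 * (D - L) ≤ dist y q) : dist (W y q (1/2)) p ≤ D - η L ε * L := by
  obtain ⟨u, hu, hyu⟩ := exists_dist_le_sub hW1 hW2 hL.le hLD hy
  obtain ⟨v, hv, hqv⟩ := exists_dist_le_sub hW1 hW2 hL.le hLD hq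
  have huv : ε * L ≤ dist u v := by linarith [dist_triangle4 y u v q, dist_comm q v]
  have hmid := hmod L ε p u v hL hε hu hv huv
  have hclose := hW4 y u q v (1/2) (by norm_num)
  linarith [dist_triangle (W y q (1/2)) (W u v (1/2)) p]

end Hyperbolic

section KrasnoselskiMann

variable {W : X → X → ℝ → X} {T : X → X} {lam : ℕ → ℝ} {xs : ℕ → X}

lemma km_dist_antitone (hW1 : DistConvex W) (hlam : ∀ n, lam n ∈ Icc (0:ℝ) 1)
    (hxs : ∀ n, xs (n + 1) = W (xs n) (T (xs n)) (lam n)) {p : X}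
    (hp : ∀ n, dist (T (xs n)) p ≤ dist (xs n) p) : Antitone fun n => dist (xs n) p := by
  refine antitone_nat_of_succ_le fun n => ?_
  have h := hW1 (xs n) (T (xs n)) p (lam n) (hlam n)
  rw [dist_comm p, dist_comm p, dist_comm p, ← hxs] at h
  nlinarith [mul_le_mul_of_nonneg_left (hp n) (hlam n).1]

lemma km_displacement_antitone (hW1 : DistConvex W) (hW2 : SegmentIsometric W)
    (hlam : ∀ n, lam n ∈ Icc (0:ℝ) 1) (hxs : ∀ n, xs (n + 1) = W (xs n) (T (xs n)) (lam n))
    {C : Set X} (hT : LipschitzOnWith 1 T C) (hxC : ∀ n, xs n ∈ C) :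
    Antitone fun n => dist (xs n) (T (xs n)) := by
  refine antitone_nat_of_succ_le fun n => ?_
  have hstep : dist (xs (n + 1)) (xs n) = lam n * dist (xs n) (T (xs n)) := by
    rw [hxs]; exact dist_comb_left hW1 hW2 (hlam n) _ _
  have hrest : dist (xs (n + 1)) (T (xs n)) = (1 - lam n) * dist (xs n) (T (xs n)) := by
    rw [hxs]; exact dist_comb_right hW1 hW2 (hlam n) _ _
  have hTstep : dist (T (xs (n + 1))) (T (xs n)) ≤ dist (xs (n + 1)) (xs n) := by
    simpa using hT.dist_le_mul _ (hxC (n + 1)) _ (hxC n)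
  linarith [dist_triangle_right (xs (n + 1)) (T (xs (n + 1))) (T (xs n))]

lemma km_exists_descent {η : ℝ → ℝ → ℝ} (hW1 : DistConvex W) (hW2 : SegmentIsometric W)
    (hW3 : CombSymm W) (hW4 : MetricConvex W)
    (hη : ∀ r ε, 0 < r → ε ∈ Ioc (0:ℝ) 2 → 0 < η r ε) (hmod : UniformlyConvexWith W η)
    (hlam : ∀ n, lam n ∈ Icc (0:ℝ) 1) (hxs : ∀ n, xs (n + 1) = W (xs n) (T (xs n)) (lam n))
    {p : X} (hp : ∀ n, dist (T (xs n)) p ≤ dist (xs n) p) {a : ℝ} (ha : 0 < a)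
    (hA : ∀ n, a ≤ dist (xs n) (T (xs n))) :
    ∃ N, ∃ c > 0, ∀ n ≥ N, dist (xs (n + 1)) p + c * (lam n * (1 - lam n)) ≤ dist (xs n) p := by
  have hd : Antitone fun n => dist (xs n) p := km_dist_antitone hW1 hlam hxs hp
  have hbdd : BddBelow (range fun n => dist (xs n) p) :=
    ⟨0, by rintro _ ⟨n, rfl⟩; exact dist_nonneg⟩
  set L := ⨅ n, dist (xs n) p
  have haL : a / 2 ≤ L := le_ciInf fun n => by
    linarith [hA n, hp n, dist_triangle_right (xs n) (T (xs n)) p]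
  have hL : 0 < L := by linarith
  obtain ⟨N, hN⟩ : ∃ N, dist (xs N) p < L + a / 4 := exists_lt_of_ciInf_lt (by linarith)
  set ε := a / (2 * L)
  have hε : ε ∈ Ioc (0:ℝ) 2 := ⟨by positivity, by rw [div_le_iff₀ (by positivity)]; linarith⟩
  have hεL : ε * L = a / 2 := by simp only [ε]; field_simp
  have hηL : 0 < η L ε * L := mul_pos (hη L ε hL hε) hL
  refine ⟨N, 2 * (η L ε * L), by positivity, fun n hn => ?_⟩
  have hLn : L ≤ dist (xs n) p := ciInf_le hbdd n
  have hnL : dist (xs n) p < L + a / 4 := (hd hn).trans_lt hN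
  have hmid := dist_midpoint_le_sub hW1 hW2 hW4 hmod hL hε hLn le_rfl (hp n)
    (by linarith [hA n])
  have := dist_comb_le hW1 hW2 hW3 hη hmod (hlam n) hηL.le le_rfl (hp n) hmid
  rw [hxs]; linarith

end KrasnoselskiMann

lemma not_tendsto_sum_of_descent {d s : ℕ → ℝ} {c : ℝ} {N : ℕ} (hd : ∀ n, 0 ≤ d n) (hc : 0 < c)
    (h : ∀ n ≥ N, d (n + 1) + c * s n ≤ d n) :
    ¬ Tendsto (fun n => ∑ k ∈ Finset.range n, s k) atTop atTop := by
  have htel : ∀ M, d (N + M) + c * ∑ k ∈ Finset.range M, s (N + k) ≤ d N := by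
    intro M
    induction M with
    | zero => simp
    | succ M ih =>
      rw [Finset.sum_range_succ, mul_add, ← add_assoc N M 1]
      linarith [h (N + M) (by omega)]
  intro hdiv
  obtain ⟨n, hn, hNn⟩ := ((hdiv.eventually_gt_atTop
    (∑ k ∈ Finset.range N, s k + d N / c)).and (eventually_ge_atTop N)).exists
  obtain ⟨M, rfl⟩ := Nat.exists_eq_add_of_le hNn
  rw [Finset.sum_range_add] at hn
  have hM : ∑ k ∈ Finset.range M, s (N + k) ≤ d N / c := by
    rw [le_div_iff₀' hc]; linarith [htel M, hd (N + M)]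
  linarith

end

theorem stmt_14_general
    {X : Type*} [MetricSpace X]
    (W : X → X → ℝ → X)
    (W1 : ∀ x y z : X, ∀ l : ℝ, l ∈ Set.Icc (0:ℝ) 1 →
      dist z (W x y l) ≤ (1 - l) * dist z x + l * dist z y)
    (W2 : ∀ x y : X, ∀ l l' : ℝ, l ∈ Set.Icc (0:ℝ) 1 → l' ∈ Set.Icc (0:ℝ) 1 →
      dist (W x y l) (W x y l') = |l - l'| * dist x y)
    (W3 : ∀ x y : X, ∀ l : ℝ, l ∈ Set.Icc (0:ℝ) 1 → W x y l = W y x (1 - l))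
    (W4 : ∀ x y z w : X, ∀ l : ℝ, l ∈ Set.Icc (0:ℝ) 1 →
      dist (W x z l) (W y w l) ≤ (1 - l) * dist x y + l * dist z w)
    (η : ℝ → ℝ → ℝ)
    (hη : ∀ r ε : ℝ, 0 < r → ε ∈ Set.Ioc (0:ℝ) 2 → η r ε ∈ Set.Ioc (0:ℝ) 1)
    (hmod : ∀ r ε : ℝ, ∀ a u v : X, 0 < r → ε ∈ Set.Ioc (0:ℝ) 2 →
      dist u a ≤ r → dist v a ≤ r → ε * r ≤ dist u v →
      dist (W u v (1/2)) a ≤ (1 - η r ε) * r)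
    (C : Set X)
    (hconv : ∀ u ∈ C, ∀ v ∈ C, ∀ l : ℝ, l ∈ Set.Icc (0:ℝ) 1 → W u v l ∈ C)
    (T : X → X) (hT : ∀ u ∈ C, T u ∈ C)
    (hTne : ∀ u ∈ C, ∀ v ∈ C, dist (T u) (T v) ≤ dist u v)
    (lam : ℕ → ℝ) (hlam : ∀ n, lam n ∈ Set.Icc (0:ℝ) 1)
    (x : X) (hx : x ∈ C)
    (xseq : ℕ → X) (hx0 : xseq 0 = x)
    (hxs : ∀ n, xseq (n + 1) = W (xseq n) (T (xseq n)) (lam n))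
    (hdiv : Filter.Tendsto (fun N => ∑ k ∈ Finset.range N, lam k * (1 - lam k))
      Filter.atTop Filter.atTop)
    (hfix : ∃ p ∈ C, T p = p)
    : Filter.Tendsto (fun n => dist (xseq n) (T (xseq n))) Filter.atTop (nhds 0) := by
  obtain ⟨p, hpC, hTp⟩ := hfix
  have hxC : ∀ n, xseq n ∈ C := km_mem hconv hT hlam hxs (hx0 ▸ hx)
  have hTC : LipschitzOnWith 1 T C :=
    LipschitzOnWith.of_dist_le_mul fun u hu v hv => by simpa using hTne u hu v hv
  have hp : ∀ n, dist (T (xseq n)) p ≤ dist (xseq n) p := fun n => by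
    simpa [hTp] using hTne _ (hxC n) _ hpC
  have hbdd : BddBelow (range fun n => dist (xseq n) (T (xseq n))) :=
    ⟨0, by rintro _ ⟨n, rfl⟩; exact dist_nonneg⟩
  have hlim := tendsto_atTop_ciInf (km_displacement_antitone W1 W2 hlam hxs hTC hxC) hbdd
  suffices h : ⨅ n, dist (xseq n) (T (xseq n)) = 0 by rwa [h] at hlim
  by_contra hne
  have ha : 0 < ⨅ n, dist (xseq n) (T (xseq n)) :=
    (le_ciInf fun _ => dist_nonneg).lt_of_ne' hne
  obtain ⟨N, c, hc, hdesc⟩ := km_exists_descent W1 W2 W3 W4 (fun r ε hr hε => (hη r ε hr hε).1)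
    hmod hlam hxs hp ha (ciInf_le hbdd)
  exact not_tendsto_sum_of_descent (d := fun n => dist (xseq n) p) (fun _ => dist_nonneg) hc
    hdesc hdiv

theorem stmt_14
    {X : Type*} [MetricSpace X]
    (W : X → X → ℝ → X)
    (W1 : ∀ x y z : X, ∀ l : ℝ, l ∈ Set.Icc (0:ℝ) 1 →
      dist z (W x y l) ≤ (1 - l) * dist z x + l * dist z y)
    (W2 : ∀ x y : X, ∀ l l' : ℝ, l ∈ Set.Icc (0:ℝ) 1 → l' ∈ Set.Icc (0:ℝ) 1 →
      dist (W x y l) (W x y l') = |l - l'| * dist x y)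
    (W3 : ∀ x y : X, ∀ l : ℝ, l ∈ Set.Icc (0:ℝ) 1 → W x y l = W y x (1 - l))
    (W4 : ∀ x y z w : X, ∀ l : ℝ, l ∈ Set.Icc (0:ℝ) 1 →
      dist (W x z l) (W y w l) ≤ (1 - l) * dist x y + l * dist z w)
    (η : ℝ → ℝ → ℝ)
    (hη : ∀ r ε : ℝ, 0 < r → ε ∈ Set.Ioc (0:ℝ) 2 → η r ε ∈ Set.Ioc (0:ℝ) 1)
    (hmod : ∀ r ε : ℝ, ∀ a u v : X, 0 < r → ε ∈ Set.Ioc (0:ℝ) 2 →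
      dist u a ≤ r → dist v a ≤ r → ε * r ≤ dist u v →
      dist (W u v (1/2)) a ≤ (1 - η r ε) * r)
    (C : Set X) (hCne : C.Nonempty)
    (hconv : ∀ u ∈ C, ∀ v ∈ C, ∀ l : ℝ, l ∈ Set.Icc (0:ℝ) 1 → W u v l ∈ C)
    (T : X → X) (hT : ∀ u ∈ C, T u ∈ C)
    (hTne : ∀ u ∈ C, ∀ v ∈ C, dist (T u) (T v) ≤ dist u v)
    (lam : ℕ → ℝ) (hlam : ∀ n, lam n ∈ Set.Icc (0:ℝ) 1)
    (x : X) (hx : x ∈ C)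
    (xseq : ℕ → X) (hx0 : xseq 0 = x)
    (hxs : ∀ n, xseq (n + 1) = W (xseq n) (T (xseq n)) (lam n))
    (hdiv : Filter.Tendsto (fun N => ∑ k ∈ Finset.range N, lam k * (1 - lam k))
      Filter.atTop Filter.atTop)
    (hfix : ∃ p ∈ C, T p = p)
    : Filter.Tendsto (fun n => dist (xseq n) (T (xseq n))) Filter.atTop (nhds 0) :=
  stmt_14_general W W1 W2 W3 W4 η hη hmod C hconv T hT hTne lam hlam x hx xseq hx0 hxs hdiv hfix
end

section
/- Let (X,ρ,W) be a uniformly convex hyperbolic space with modulus η non-increasing in r, C ⊆ X nonempty convex and bounded with diameter d_C, T : C → C nonexpansive, λ ∈ (0,1) constant, and (x_n) the Krasnoselski–Mann iteration x_{n+1} = (1−λ)x_n ⊕ λ T x_n from x ∈ C. Assume C has the approximate fixed point property (for every δ > 0 there is y ∈ C with ρ(y,Ty) < δ). Then for every 0 < ε < 2d_C and all n ≥ (1/(λ(1−λ)))·⌈(d_C+1)/(ε·η(d_C+1, ε/(d_C+1)))⌉, one has ρ(x_n, T x_n) ≤ ε. -/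
theorem stmt_15
    {X : Type*} [MetricSpace X]
    (W : X → X → ℝ → X)
    (W1 : ∀ x y z : X, ∀ l : ℝ, l ∈ Set.Icc (0:ℝ) 1 →
      dist z (W x y l) ≤ (1 - l) * dist z x + l * dist z y)
    (W2 : ∀ x y : X, ∀ l l' : ℝ, l ∈ Set.Icc (0:ℝ) 1 → l' ∈ Set.Icc (0:ℝ) 1 →
      dist (W x y l) (W x y l') = |l - l'| * dist x y)
    (W3 : ∀ x y : X, ∀ l : ℝ, l ∈ Set.Icc (0:ℝ) 1 → W x y l = W y x (1 - l))
    (W4 : ∀ x y z w : X, ∀ l : ℝ, l ∈ Set.Icc (0:ℝ) 1 →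
      dist (W x z l) (W y w l) ≤ (1 - l) * dist x y + l * dist z w)
    (η : ℝ → ℝ → ℝ)
    (hη : ∀ r ε : ℝ, 0 < r → ε ∈ Set.Ioc (0:ℝ) 2 → η r ε ∈ Set.Ioc (0:ℝ) 1)
    (hmod : ∀ r ε : ℝ, ∀ a u v : X, 0 < r → ε ∈ Set.Ioc (0:ℝ) 2 →
      dist u a ≤ r → dist v a ≤ r → ε * r ≤ dist u v →
      dist (W u v (1/2)) a ≤ (1 - η r ε) * r)
    (hdec : ∀ r s ε : ℝ, 0 < r → r ≤ s → ε ∈ Set.Ioc (0:ℝ) 2 → η s ε ≤ η r ε)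
    (C : Set X) (hCne : C.Nonempty)
    (hconv : ∀ u ∈ C, ∀ v ∈ C, ∀ l : ℝ, l ∈ Set.Icc (0:ℝ) 1 → W u v l ∈ C)
    (hCbd : Bornology.IsBounded C)
    (dC : ℝ) (hdC : Metric.diam C = dC)
    (T : X → X) (hT : ∀ u ∈ C, T u ∈ C)
    (hTne : ∀ u ∈ C, ∀ v ∈ C, dist (T u) (T v) ≤ dist u v)
    (l : ℝ) (hl : l ∈ Set.Ioo (0:ℝ) 1)
    (x : X) (hx : x ∈ C)
    (xseq : ℕ → X) (hx0 : xseq 0 = x)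
    (hxs : ∀ n, xseq (n + 1) = W (xseq n) (T (xseq n)) l)
    (happrox : ∀ δ : ℝ, 0 < δ → ∃ y ∈ C, dist y (T y) < δ)
    : ∀ ε : ℝ, 0 < ε → ε < 2 * dC →
      ∀ n : ℕ,
        (1 / (l * (1 - l))) * (⌈(dC + 1) / (ε * η (dC + 1) (ε / (dC + 1)))⌉₊ : ℝ) ≤ (n : ℝ) →
        dist (xseq n) (T (xseq n)) ≤ ε := by
  classical
  have hIcc0 : (0:ℝ) ∈ Set.Icc (0:ℝ) 1 := by norm_num
  have hIcc1 : (1:ℝ) ∈ Set.Icc (0:ℝ) 1 := by norm_num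
  have hIcch : (1/2:ℝ) ∈ Set.Icc (0:ℝ) 1 := by norm_num
  have hW0 : ∀ a b : X, W a b 0 = a := by
    intro a b
    have h : dist a (W a b 0) ≤ 0 := by simpa using W1 a b a 0 hIcc0
    exact (dist_le_zero.mp h).symm
  have hWone : ∀ a b : X, W a b 1 = b := by
    intro a b
    have h : dist b (W a b 1) ≤ 0 := by simpa using W1 a b b 1 hIcc1
    exact (dist_le_zero.mp h).symm
  have hdL : ∀ (a b : X) (t : ℝ), t ∈ Set.Icc (0:ℝ) 1 → dist a (W a b t) = t * dist a b := by
    intro a b t ht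
    have h := W2 a b t 0 ht hIcc0
    rw [hW0] at h
    rw [dist_comm]
    simpa [abs_of_nonneg ht.1] using h
  have hdR : ∀ (a b : X) (t : ℝ), t ∈ Set.Icc (0:ℝ) 1 → dist (W a b t) b = (1-t) * dist a b := by
    intro a b t ht
    have h := W2 a b t 1 ht hIcc1
    rw [hWone] at h
    rw [h, abs_of_nonpos (by linarith [ht.2])]
    ring_nf
  -- uniqueness of the "ratio point"
  have huniq : ∀ (a b z₁ z₂ : X) (t : ℝ), 0 < t →
      dist a z₁ = t → dist a z₂ = t →
      dist z₁ b = dist a b - t → dist z₂ b = dist a b - t → z₁ = z₂ := by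
    intro a b z₁ z₂ t ht h1 h2 h1' h2'
    by_contra hne
    have hd12 : 0 < dist z₁ z₂ := dist_pos.mpr hne
    have hd12' : dist z₁ z₂ ≤ 2 * t := by
      have htr := dist_triangle z₁ a z₂
      rw [dist_comm z₁ a] at htr
      linarith
    have hεI : dist z₁ z₂ / t ∈ Set.Ioc (0:ℝ) 2 :=
      ⟨div_pos hd12 ht, by rw [div_le_iff₀ ht]; linarith⟩
    have hz1a : dist z₁ a ≤ t := by rw [dist_comm]; exact h1.le
    have hz2a : dist z₂ a ≤ t := by rw [dist_comm]; exact h2.le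
    have hεrt : (dist z₁ z₂ / t) * t ≤ dist z₁ z₂ := by
      rw [div_mul_cancel₀ _ ht.ne']
    have hmid := hmod t (dist z₁ z₂ / t) a z₁ z₂ ht hεI hz1a hz2a hεrt
    have hη1 := (hη t (dist z₁ z₂ / t) ht hεI).1
    have hma : dist a (W z₁ z₂ (1/2)) ≤ t := by
      have hw := W1 z₁ z₂ a (1/2) hIcch
      rw [h1, h2] at hw
      linarith
    have hmb : dist (W z₁ z₂ (1/2)) b ≤ dist a b - t := by
      have hw := W1 z₁ z₂ b (1/2) hIcch
      rw [dist_comm b z₁, dist_comm b z₂] at hw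
      rw [h1', h2'] at hw
      rw [dist_comm]
      linarith
    have hge : t ≤ dist a (W z₁ z₂ (1/2)) := by
      have htr := dist_triangle a (W z₁ z₂ (1/2)) b
      linarith
    have : dist (W z₁ z₂ (1/2)) a ≤ (1 - η t (dist z₁ z₂ / t)) * t := hmid
    rw [dist_comm] at this
    nlinarith
  -- general λ uniform convexity, half case
  have hhalf : ∀ (a u v : X) (r ε' μ : ℝ), 0 < r → ε' ∈ Set.Ioc (0:ℝ) 2 →
      0 < μ → μ ≤ 1/2 →
      dist u a ≤ r → dist v a ≤ r → ε' * r ≤ dist u v →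
      dist (W u v μ) a ≤ (1 - 2*μ*(η r ε')) * r := by
    intro a u v r ε' μ hr hε' hμ0 hμh hua hva hεr
    have hμI : μ ∈ Set.Icc (0:ℝ) 1 := ⟨hμ0.le, by linarith⟩
    have h2μI : 2*μ ∈ Set.Icc (0:ℝ) 1 := ⟨by linarith, by linarith⟩
    have hduv : 0 < dist u v := lt_of_lt_of_le (mul_pos hε'.1 hr) hεr
    have hum : dist u (W u v (1/2)) = (1/2) * dist u v := hdL u v (1/2) hIcch
    have hz1 : dist u (W u v μ) = μ * dist u v := hdL u v μ hμI
    have hz1m : dist (W u v μ) (W u v (1/2)) = (1/2 - μ) * dist u v := by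
      have h := W2 u v μ (1/2) hμI hIcch
      rw [h, abs_of_nonpos (by linarith)]
      ring_nf
    have hz2 : dist u (W u (W u v (1/2)) (2*μ)) = (2*μ) * dist u (W u v (1/2)) :=
      hdL u (W u v (1/2)) (2*μ) h2μI
    have hz2m : dist (W u (W u v (1/2)) (2*μ)) (W u v (1/2))
        = (1 - 2*μ) * dist u (W u v (1/2)) := hdR u (W u v (1/2)) (2*μ) h2μI
    have heq : W u v μ = W u (W u v (1/2)) (2*μ) := by
      refine huniq u (W u v (1/2)) _ _ (μ * dist u v) (mul_pos hμ0 hduv) hz1 ?_ ?_ ?_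
      · rw [hz2, hum]; ring
      · rw [hz1m, hum]; ring
      · rw [hz2m, hum]; ring
    have hmid := hmod r ε' a u v hr hε' hua hva hεr
    have hW1' := W1 u (W u v (1/2)) a (2*μ) h2μI
    rw [heq, dist_comm]
    have h1 : dist a u ≤ r := by rw [dist_comm]; exact hua
    have h2 : dist a (W u v (1/2)) ≤ (1 - η r ε') * r := by
      rw [dist_comm]; exact hmid
    have hc1 : (0:ℝ) ≤ 1 - 2*μ := by linarith
    have hc2 : (0:ℝ) ≤ 2*μ := by linarith
    calc dist a (W u (W u v (1/2)) (2*μ))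
        ≤ (1 - 2*μ) * dist a u + (2*μ) * dist a (W u v (1/2)) := hW1'
      _ ≤ (1 - 2*μ) * r + (2*μ) * ((1 - η r ε') * r) := by
          have e1 := mul_le_mul_of_nonneg_left h1 hc1
          have e2 := mul_le_mul_of_nonneg_left h2 hc2
          linarith
      _ = (1 - 2*μ*(η r ε')) * r := by ring
  have hlI : l ∈ Set.Icc (0:ℝ) 1 := ⟨hl.1.le, hl.2.le⟩
  have hgen : ∀ (a u v : X) (r ε' : ℝ), 0 < r → ε' ∈ Set.Ioc (0:ℝ) 2 →
      dist u a ≤ r → dist v a ≤ r → ε' * r ≤ dist u v →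
      dist (W u v l) a ≤ (1 - 2*l*(1-l)*(η r ε')) * r := by
    intro a u v r ε' hr hε'I hua hva hεr
    have hη0 := (hη r ε' hr hε'I).1
    rcases le_or_gt l (1/2) with hc | hc
    · have hb := hhalf a u v r ε' l hr hε'I hl.1 hc hua hva hεr
      nlinarith [hb, mul_nonneg (mul_nonneg hl.1.le hl.1.le) (mul_nonneg hη0.le hr.le)]
    · rw [W3 u v l hlI]
      have hεr' : ε' * r ≤ dist v u := by rw [dist_comm]; exact hεr
      have hb := hhalf a v u r ε' (1-l) hr hε'I (by linarith [hl.2]) (by linarith)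
        hva hua hεr'
      nlinarith [hb, mul_nonneg (mul_nonneg (by linarith [hl.2] : (0:ℝ) ≤ 1-l) (by linarith [hl.2] : (0:ℝ) ≤ 1-l)) (mul_nonneg hη0.le hr.le)]
  -- iteration stays in C
  have hxC : ∀ m, xseq m ∈ C := by
    intro m
    induction m with
    | zero => rw [hx0]; exact hx
    | succ k ih => rw [hxs]; exact hconv _ ih _ (hT _ ih) l hlI
  -- displacement is nonincreasing
  have hstepmono : ∀ m, dist (xseq (m+1)) (T (xseq (m+1))) ≤ dist (xseq m) (T (xseq m)) := by
    intro m
    have h1 : dist (xseq (m+1)) (T (xseq m)) = (1-l) * dist (xseq m) (T (xseq m)) := by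
      rw [hxs]; exact hdR _ _ l hlI
    have h2 : dist (xseq m) (xseq (m+1)) = l * dist (xseq m) (T (xseq m)) := by
      conv_lhs => rw [hxs]
      exact hdL _ _ l hlI
    have h3 : dist (T (xseq m)) (T (xseq (m+1))) ≤ dist (xseq m) (xseq (m+1)) :=
      hTne _ (hxC m) _ (hxC (m+1))
    have h4 := dist_triangle (xseq (m+1)) (T (xseq m)) (T (xseq (m+1)))
    linarith
  have hmono : ∀ m k, m ≤ k → dist (xseq k) (T (xseq k)) ≤ dist (xseq m) (T (xseq m)) := by
    intro m k hmk
    induction hmk with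
    | refl => exact le_rfl
    | step _ ih => exact (hstepmono _).trans ih
  -- main argument
  intro ε hε0 hε2 n hn
  have hdC0 : 0 < dC := by linarith
  have hK0 : (0:ℝ) < dC + 1 := by linarith
  have hεK : ε / (dC + 1) ∈ Set.Ioc (0:ℝ) 2 :=
    ⟨div_pos hε0 hK0, by rw [div_le_iff₀ hK0]; linarith⟩
  have hh := hη (dC + 1) (ε/(dC + 1)) hK0 hεK
  have hc0 : 0 < l * (1-l) := mul_pos hl.1 (by linarith [hl.2])
  have hεh : 0 < ε * η (dC + 1) (ε/(dC + 1)) := mul_pos hε0 hh.1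
  have hceil : (dC + 1) / (ε * η (dC + 1) (ε / (dC + 1)))
      ≤ (⌈(dC + 1) / (ε * η (dC + 1) (ε / (dC + 1)))⌉₊ : ℝ) := Nat.le_ceil _
  have hkey : dC + 1 ≤ (n:ℝ) * (l*(1-l)) * (ε * η (dC + 1) (ε/(dC + 1))) := by
    have h1 : (⌈(dC + 1) / (ε * η (dC + 1) (ε / (dC + 1)))⌉₊ : ℝ) ≤ (n:ℝ) * (l*(1-l)) := by
      have h0 := mul_le_mul_of_nonneg_right hn hc0.le
      rw [one_div, inv_mul_eq_div, div_mul_cancel₀] at h0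
      · exact h0
      · exact hc0.ne'
    have h2 : (dC + 1) / (ε * η (dC + 1) (ε/(dC + 1))) ≤ (n:ℝ)*(l*(1-l)) :=
      le_trans hceil h1
    rw [div_le_iff₀ hεh] at h2
    linarith
  by_contra hcon
  push_neg at hcon
  have hbig : ∀ m, m ≤ n → ε < dist (xseq m) (T (xseq m)) :=
    fun m hm => lt_of_lt_of_le hcon (hmono m n hm)
  set δ : ℝ := 1/((n:ℝ)+1) with hδdef
  have hn0 : (0:ℝ) ≤ (n:ℝ) := Nat.cast_nonneg n
  have hδ0 : 0 < δ := by positivity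
  have hδ1 : δ ≤ 1 := by rw [hδdef, div_le_one (by linarith)]; linarith
  obtain ⟨y, hyC, hyT⟩ := happrox δ hδ0
  have hstep : ∀ m, m ≤ n →
      dist (xseq (m+1)) y ≤ dist (xseq m) y + δ - l*(1-l)*(η (dC + 1) (ε/(dC + 1)))*ε := by
    intro m hm
    have hsd : dist (xseq m) y ≤ dC := by
      rw [← hdC]; exact Metric.dist_le_diam_of_mem hCbd (hxC m) hyC
    have hs0 : 0 ≤ dist (xseq m) y := dist_nonneg
    have hr0 : 0 < dist (xseq m) y + δ := by linarith
    have hrK : dist (xseq m) y + δ ≤ dC + 1 := by linarith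
    have hTdist : dist (T (xseq m)) y ≤ dist (xseq m) y + δ := by
      have t1 := dist_triangle (T (xseq m)) (T y) y
      have t2 := hTne _ (hxC m) _ hyC
      rw [dist_comm (T y) y] at t1
      linarith [hyT.le]
    have hεr : (ε/(dC + 1)) * (dist (xseq m) y + δ) ≤ dist (xseq m) (T (xseq m)) := by
      have h1 : (ε/(dC + 1)) * (dist (xseq m) y + δ) ≤ (ε/(dC + 1)) * (dC + 1) :=
        mul_le_mul_of_nonneg_left hrK (le_of_lt hεK.1)
      rw [div_mul_cancel₀ _ hK0.ne'] at h1
      linarith [hbig m hm]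
    have hg := hgen y (xseq m) (T (xseq m)) (dist (xseq m) y + δ) (ε/(dC + 1)) hr0 hεK
      (by linarith) hTdist hεr
    rw [← hxs] at hg
    have hηm : η (dC + 1) (ε/(dC + 1)) ≤ η (dist (xseq m) y + δ) (ε/(dC + 1)) :=
      hdec _ (dC + 1) _ hr0 hrK hεK
    have hlow : ε/2 ≤ dist (xseq m) y + δ := by
      have t1 := dist_triangle (xseq m) y (T (xseq m))
      have t2 := dist_triangle y (T y) (T (xseq m))
      have t3 : dist (T y) (T (xseq m)) ≤ dist y (xseq m) := hTne _ hyC _ (hxC m)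
      rw [dist_comm y (xseq m)] at t3
      linarith [hbig m hm, hyT.le]
    have hη2 := (hη _ (ε/(dC + 1)) hr0 hεK).1
    have e1 : η (dC + 1) (ε/(dC + 1)) * (ε/2)
        ≤ η (dist (xseq m) y + δ) (ε/(dC + 1)) * (dist (xseq m) y + δ) := by
      calc η (dC + 1) (ε/(dC + 1)) * (ε/2)
          ≤ η (dC + 1) (ε/(dC + 1)) * (dist (xseq m) y + δ) :=
            mul_le_mul_of_nonneg_left hlow hh.1.le
        _ ≤ η (dist (xseq m) y + δ) (ε/(dC + 1)) * (dist (xseq m) y + δ) :=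
            mul_le_mul_of_nonneg_right hηm hr0.le
    have e2 := mul_le_mul_of_nonneg_left e1 (by linarith : (0:ℝ) ≤ 2*(l*(1-l)))
    nlinarith [hg]
  have hacc : ∀ m, m ≤ n →
      dist (xseq m) y ≤ dist (xseq 0) y
        + (m:ℝ)*δ - (m:ℝ)*(l*(1-l)*(η (dC + 1) (ε/(dC + 1)))*ε) := by
    intro m
    induction m with
    | zero => intro _; simp
    | succ k ih =>
      intro hk
      have hk' : k ≤ n := Nat.le_of_succ_le hk
      have h1 := hstep k hk'
      have h2 := ih hk'
      push_cast
      push_cast at h2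
      linarith
  have hs0C : dist (xseq 0) y ≤ dC := by
    rw [← hdC]; exact Metric.dist_le_diam_of_mem hCbd (hxC 0) hyC
  have hfin := hacc n le_rfl
  have hnδ : (n:ℝ)*δ < 1 := by
    rw [hδdef, mul_one_div, div_lt_one (by linarith)]
    linarith
  have hring : (n:ℝ)*(l*(1-l)*(η (dC + 1) (ε/(dC + 1)))*ε)
      = (n:ℝ) * (l*(1-l)) * (ε * η (dC + 1) (ε/(dC + 1))) := by ring
  rw [hring] at hfin
  linarith [dist_nonneg (x := xseq n) (y := y), hkey]
end

section
/- Quadratic rate of asymptotic regularity in CAT(0)-spaces (general λ_n): Let X be a CAT(0)-space (hyperbolic space satisfying the CN-inequality), C ⊆ X nonempty convex bounded with diameter d_C, T : C → C nonexpansive, (λ_n) ⊆ [0,1], and θ : ℕ → ℕ with ∑_{k=0}^{θ(n)} λ_k(1−λ_k) ≥ n for all n. Assume C has the approximate fixed point property for T. Then for every x ∈ C, every 0 < ε < 2d_C, and every n ≥ θ(⌈8(d_C+1)²/ε²⌉), the Krasnoselski–Mann iteration satisfies ρ(x_n, T x_n) ≤ ε. -/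
open Filter Topology

theorem keyIneq {X : Type*} [MetricSpace X]
    (W : X → X → ℝ → X)
    (W1 : ∀ x y z : X, ∀ l : ℝ, l ∈ Set.Icc (0:ℝ) 1 →
      dist z (W x y l) ≤ (1 - l) * dist z x + l * dist z y)
    (W2 : ∀ x y : X, ∀ l l' : ℝ, l ∈ Set.Icc (0:ℝ) 1 → l' ∈ Set.Icc (0:ℝ) 1 →
      dist (W x y l) (W x y l') = |l - l'| * dist x y)
    (CN : ∀ x y z : X,
      dist z (W x y (1/2)) ^ 2 ≤
        (1/2) * dist z x ^ 2 + (1/2) * dist z y ^ 2 - (1/4) * dist x y ^ 2)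
    (x y z : X) (l : ℝ) (hl : l ∈ Set.Icc (0:ℝ) 1) :
    dist z (W x y l) ^ 2 ≤
      (1 - l) * dist z x ^ 2 + l * dist z y ^ 2 - l * (1 - l) * dist x y ^ 2 := by
  have hW0 : W x y 0 = x := by
    have h := W1 x y x 0 (by norm_num)
    simp at h
    exact h.symm
  have hW1' : W x y 1 = y := by
    have h := W1 x y y 1 (by norm_num)
    simp at h
    exact h.symm
  -- midpoint uniqueness
  have hmid : ∀ p q m : X, dist p m = dist p q / 2 → dist q m = dist p q / 2 →
      m = W p q (1/2) := by
    intro p q m h1 h2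
    have hC := CN p q m
    have e1 : dist m p = dist p q / 2 := by rw [dist_comm]; exact h1
    have e2 : dist m q = dist p q / 2 := by rw [dist_comm]; exact h2
    rw [e1, e2] at hC
    have h0 : dist m (W p q (1/2)) ^ 2 ≤ 0 := by nlinarith
    have : dist m (W p q (1/2)) = 0 := by
      nlinarith [dist_nonneg (x := m) (y := W p q (1/2))]
    exact eq_of_dist_eq_zero this
  have hsegmid : ∀ s t : ℝ, s ∈ Set.Icc (0:ℝ) 1 → t ∈ Set.Icc (0:ℝ) 1 →
      W x y ((s + t) / 2) = W (W x y s) (W x y t) (1/2) := by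
    intro s t hs ht
    have hm : (s + t) / 2 ∈ Set.Icc (0:ℝ) 1 := by
      constructor <;> [linarith [hs.1, ht.1]; linarith [hs.2, ht.2]]
    apply hmid
    · rw [W2 x y s ((s+t)/2) hs hm, W2 x y s t hs ht]
      have : s - (s + t) / 2 = (s - t) / 2 := by ring
      rw [this, abs_div]
      norm_num
      ring
    · rw [dist_comm (W x y t), W2 x y ((s+t)/2) t hm ht, W2 x y s t hs ht]
      have : (s + t) / 2 - t = (s - t) / 2 := by ring
      rw [this, abs_div]
      norm_num
      ring
  -- dyadic case
  have hdy : ∀ n : ℕ, ∀ k : ℕ, k ≤ 2 ^ n →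
      dist z (W x y ((k : ℝ) / 2 ^ n)) ^ 2 ≤
        (1 - (k : ℝ) / 2 ^ n) * dist z x ^ 2 + ((k : ℝ) / 2 ^ n) * dist z y ^ 2
          - ((k : ℝ) / 2 ^ n) * (1 - (k : ℝ) / 2 ^ n) * dist x y ^ 2 := by
    intro n
    induction n with
    | zero =>
      intro k hk
      interval_cases k
      · norm_num [hW0]
      · norm_num [hW1']
    | succ n ih =>
      intro k hk
      have h2n : (0:ℝ) < 2 ^ n := by positivity
      rcases Nat.even_or_odd k with ⟨j, hj⟩ | ⟨j, hj⟩
      · have hcast : (k : ℝ) / 2 ^ (n + 1) = (j : ℝ) / 2 ^ n := by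
          subst hj; push_cast; rw [pow_succ]; field_simp; ring
        rw [hcast]
        exact ih j (by omega)
      · have hj1 : j + 1 ≤ 2 ^ n := by
          have : 2 * j + 1 ≤ 2 ^ (n + 1) := by omega
          omega
        have hj0 : j ≤ 2 ^ n := by omega
        have hms : (j : ℝ) / 2 ^ n ∈ Set.Icc (0:ℝ) 1 := by
          constructor
          · positivity
          · rw [div_le_one h2n]
            have h := (Nat.cast_le (α := ℝ)).mpr hj0
            push_cast at h
            linarith
        have hmt : ((j : ℝ) + 1) / 2 ^ n ∈ Set.Icc (0:ℝ) 1 := by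
          constructor
          · positivity
          · rw [div_le_one h2n]
            have := (Nat.cast_le (α := ℝ)).mpr hj1
            push_cast at this ⊢
            linarith
        have hcast : (k : ℝ) / 2 ^ (n + 1) = ((j : ℝ) / 2 ^ n + ((j : ℝ) + 1) / 2 ^ n) / 2 := by
          subst hj; push_cast; rw [pow_succ]; field_simp; ring
        rw [hcast, hsegmid _ _ hms hmt]
        have h1 := ih j hj0
        have h2' := ih (j + 1) hj1
        have h2 : dist z (W x y (((j:ℝ)+1) / 2 ^ n)) ^ 2 ≤
            (1 - ((j:ℝ)+1) / 2 ^ n) * dist z x ^ 2 + (((j:ℝ)+1) / 2 ^ n) * dist z y ^ 2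
              - (((j:ℝ)+1) / 2 ^ n) * (1 - ((j:ℝ)+1) / 2 ^ n) * dist x y ^ 2 := by
          push_cast at h2' ⊢; exact h2'
        have hC := CN (W x y ((j:ℝ) / 2 ^ n)) (W x y (((j:ℝ)+1) / 2 ^ n)) z
        have hd : dist (W x y ((j:ℝ) / 2 ^ n)) (W x y (((j:ℝ)+1) / 2 ^ n)) ^ 2
            = ((j:ℝ) / 2 ^ n - ((j:ℝ)+1) / 2 ^ n) ^ 2 * dist x y ^ 2 := by
          rw [W2 x y _ _ hms hmt, mul_pow, sq_abs]
        nlinarith [hC, h1, h2, hd]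
  -- continuity extension
  set F : ℝ → ℝ := fun t => dist z (W x y t) ^ 2 -
      ((1 - t) * dist z x ^ 2 + t * dist z y ^ 2 - t * (1 - t) * dist x y ^ 2) with hF
  suffices h : F l ≤ 0 by simp only [hF] at h; linarith
  have hcont : ContinuousOn F (Set.Icc (0:ℝ) 1) := by
    have hlip : LipschitzOnWith (Real.toNNReal (dist x y)) (fun t : ℝ => W x y t)
        (Set.Icc (0:ℝ) 1) := by
      rw [lipschitzOnWith_iff_dist_le_mul]
      intro s hs t ht
      rw [W2 x y s t hs ht, Real.coe_toNNReal _ dist_nonneg, Real.dist_eq, mul_comm]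
    have hWc : ContinuousOn (fun t : ℝ => W x y t) (Set.Icc (0:ℝ) 1) := hlip.continuousOn
    have hd : ContinuousOn (fun t : ℝ => dist z (W x y t)) (Set.Icc (0:ℝ) 1) :=
      (continuous_const.dist continuous_id).comp_continuousOn hWc
    exact (hd.pow 2).sub (by fun_prop)
  set u : ℕ → ℝ := fun n => (⌊l * 2 ^ n⌋₊ : ℝ) / 2 ^ n with hu
  have h2n : ∀ n : ℕ, (0:ℝ) < 2 ^ n := fun n => by positivity
  have hfl : ∀ n : ℕ, ⌊l * 2 ^ n⌋₊ ≤ 2 ^ n := by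
    intro n
    have h1 : l * 2 ^ n ≤ ((2 ^ n : ℕ) : ℝ) := by
      push_cast
      nlinarith [hl.2, (h2n n)]
    calc ⌊l * 2 ^ n⌋₊ ≤ ⌊((2 ^ n : ℕ) : ℝ)⌋₊ := Nat.floor_le_floor h1
      _ = 2 ^ n := Nat.floor_natCast _
  have hunmem : ∀ n, u n ∈ Set.Icc (0:ℝ) 1 := by
    intro n
    constructor
    · positivity
    · rw [div_le_one (h2n n)]
      have h := (Nat.cast_le (α := ℝ)).mpr (hfl n)
      push_cast at h
      linarith
  have hFn : ∀ n, F (u n) ≤ 0 := by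
    intro n
    have := hdy n ⌊l * 2 ^ n⌋₊ (hfl n)
    simp only [hF, hu]
    linarith
  have hle : ∀ n, u n ≤ l := by
    intro n
    rw [hu]
    rw [div_le_iff₀ (h2n n)]
    exact Nat.floor_le (mul_nonneg hl.1 (h2n n).le)
  have hge : ∀ n, l - (1/2 : ℝ) ^ n ≤ u n := by
    intro n
    have h := Nat.lt_floor_add_one (l * 2 ^ n)
    rw [hu]
    rw [le_div_iff₀ (h2n n)]
    have : (1/2 : ℝ) ^ n * 2 ^ n = 1 := by
      rw [← mul_pow]; norm_num
    nlinarith [h]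
  have htend : Tendsto u atTop (𝓝 l) := by
    have hlow : Tendsto (fun n : ℕ => l - (1/2 : ℝ) ^ n) atTop (𝓝 l) := by
      have := tendsto_pow_atTop_nhds_zero_of_lt_one (by norm_num : (0:ℝ) ≤ 1/2) (by norm_num)
      have := tendsto_const_nhds.sub this (f := fun _ : ℕ => l)
      simpa using this
    exact tendsto_of_tendsto_of_tendsto_of_le_of_le hlow tendsto_const_nhds hge hle
  have htw : Tendsto u atTop (𝓝[Set.Icc (0:ℝ) 1] l) :=
    tendsto_nhdsWithin_of_tendsto_nhds_of_eventually_within u htend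
      (Filter.Eventually.of_forall hunmem)
  have hFt : Tendsto (fun n => F (u n)) atTop (𝓝 (F l)) :=
    (hcont.continuousWithinAt hl).tendsto.comp htw
  exact le_of_tendsto hFt (Filter.Eventually.of_forall hFn)

set_option maxHeartbeats 1000000 in
theorem stmt_16
    {X : Type*} [MetricSpace X]
    (W : X → X → ℝ → X)
    (W1 : ∀ x y z : X, ∀ l : ℝ, l ∈ Set.Icc (0:ℝ) 1 →
      dist z (W x y l) ≤ (1 - l) * dist z x + l * dist z y)
    (W2 : ∀ x y : X, ∀ l l' : ℝ, l ∈ Set.Icc (0:ℝ) 1 → l' ∈ Set.Icc (0:ℝ) 1 →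
      dist (W x y l) (W x y l') = |l - l'| * dist x y)
    (W3 : ∀ x y : X, ∀ l : ℝ, l ∈ Set.Icc (0:ℝ) 1 → W x y l = W y x (1 - l))
    (W4 : ∀ x y z w : X, ∀ l : ℝ, l ∈ Set.Icc (0:ℝ) 1 →
      dist (W x z l) (W y w l) ≤ (1 - l) * dist x y + l * dist z w)
    (CN : ∀ x y z : X,
      dist z (W x y (1/2)) ^ 2 ≤
        (1/2) * dist z x ^ 2 + (1/2) * dist z y ^ 2 - (1/4) * dist x y ^ 2)
    (C : Set X) (hCne : C.Nonempty)
    (hconv : ∀ u ∈ C, ∀ v ∈ C, ∀ l : ℝ, l ∈ Set.Icc (0:ℝ) 1 → W u v l ∈ C)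
    (T : X → X) (hT : ∀ u ∈ C, T u ∈ C)
    (hTne : ∀ u ∈ C, ∀ v ∈ C, dist (T u) (T v) ≤ dist u v)
    (lam : ℕ → ℝ) (hlam : ∀ n, lam n ∈ Set.Icc (0:ℝ) 1)
    (x : X) (hx : x ∈ C)
    (xseq : ℕ → X) (hx0 : xseq 0 = x)
    (hxs : ∀ n, xseq (n + 1) = W (xseq n) (T (xseq n)) (lam n))
    (hCbd : Bornology.IsBounded C)
    (dC : ℝ) (hdC : Metric.diam C = dC)
    (θ : ℕ → ℕ)
    (hθ : ∀ n : ℕ, (n : ℝ) ≤ ∑ k ∈ Finset.range (θ n + 1), lam k * (1 - lam k))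
    (happrox : ∀ δ : ℝ, 0 < δ → ∃ y ∈ C, dist y (T y) < δ)
    : ∀ ε : ℝ, 0 < ε → ε < 2 * dC →
      ∀ n : ℕ, θ ⌈8 * (dC + 1) ^ 2 / ε ^ 2⌉₊ ≤ n →
        dist (xseq n) (T (xseq n)) ≤ ε := by
  intro ε hε hε2 n hn
  have hdC0 : 0 ≤ dC := hdC ▸ Metric.diam_nonneg
  set c : ℕ → ℝ := fun m => dist (xseq m) (T (xseq m)) with hc
  -- membership
  have hmemC : ∀ m, xseq m ∈ C := by
    intro m
    induction m with
    | zero => rw [hx0]; exact hx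
    | succ m ih => rw [hxs m]; exact hconv _ ih _ (hT _ ih) _ (hlam m)
  -- W endpoints
  have hW0 : ∀ u v : X, W u v 0 = u := by
    intro u v
    have h := W1 u v u 0 (by norm_num)
    simp at h
    exact h.symm
  have hW1' : ∀ u v : X, W u v 1 = v := by
    intro u v
    have h := W1 u v v 1 (by norm_num)
    simp at h
    exact h.symm
  -- step distances
  have hstep1 : ∀ m, dist (xseq (m + 1)) (T (xseq m)) = (1 - lam m) * c m := by
    intro m
    rw [hxs m]
    have h := W2 (xseq m) (T (xseq m)) (lam m) 1 (hlam m) (by norm_num)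
    rw [hW1'] at h
    rw [h, abs_of_nonpos (by linarith [(hlam m).2]), hc]
    ring_nf
  have hstep0 : ∀ m, dist (xseq m) (xseq (m + 1)) = lam m * c m := by
    intro m
    rw [dist_comm, hxs m]
    have h := W2 (xseq m) (T (xseq m)) (lam m) 0 (hlam m) (by norm_num)
    rw [hW0] at h
    rw [h, abs_of_nonneg (by linarith [(hlam m).1]), hc]
    ring_nf
  -- c is antitone
  have hmono : ∀ m, c (m + 1) ≤ c m := by
    intro m
    have h1 : c (m + 1) ≤ dist (xseq (m + 1)) (T (xseq m)) + dist (T (xseq m)) (T (xseq (m + 1))) :=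
      dist_triangle _ _ _
    have h2 : dist (T (xseq m)) (T (xseq (m + 1))) ≤ dist (xseq m) (xseq (m + 1)) :=
      hTne _ (hmemC m) _ (hmemC (m + 1))
    rw [hstep0 m] at h2
    rw [hstep1 m] at h1
    linarith
  have hanti : Antitone c := antitone_nat_of_succ_le hmono
  have hcnn : ∀ m, 0 ≤ c m := fun m => dist_nonneg
  -- key bound
  set n₀ : ℕ := ⌈8 * (dC + 1) ^ 2 / ε ^ 2⌉₊ with hn₀
  set N : ℕ := θ n₀ with hN
  have hkeybd : c N ^ 2 * n₀ ≤ dC ^ 2 := by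
    apply le_of_forall_pos_le_add
    intro η hη
    set δ : ℝ := min 1 (η / ((N + 1) * (2 * dC + 2))) with hδdef
    have hden : (0:ℝ) < (N + 1) * (2 * dC + 2) := by positivity
    have hδ : 0 < δ := lt_min one_pos (div_pos hη hden)
    have hδ1 : δ ≤ 1 := min_le_left _ _
    obtain ⟨y, hyC, hyδ⟩ := happrox δ hδ
    have ha : ∀ m, dist (xseq m) y ≤ dC :=
      fun m => hdC ▸ Metric.dist_le_diam_of_mem hCbd (hmemC m) hyC
    -- one-step recursion
    have hrec : ∀ m, dist (xseq (m + 1)) y ^ 2 + lam m * (1 - lam m) * c m ^ 2 ≤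
        dist (xseq m) y ^ 2 + (2 * dC * δ + δ ^ 2) := by
      intro m
      have hk := keyIneq W W1 W2 CN (xseq m) (T (xseq m)) y (lam m) (hlam m)
      rw [dist_comm y (xseq m)] at hk
      have hTb : dist y (T (xseq m)) ≤ dist (xseq m) y + δ := by
        calc dist y (T (xseq m)) ≤ dist y (T y) + dist (T y) (T (xseq m)) := dist_triangle _ _ _
          _ ≤ δ + dist y (xseq m) := add_le_add hyδ.le (hTne _ hyC _ (hmemC m))
          _ = dist (xseq m) y + δ := by rw [dist_comm]; ring
      have hb2 : dist y (T (xseq m)) ^ 2 ≤ (dist (xseq m) y + δ) ^ 2 := by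
        nlinarith [dist_nonneg (x := y) (y := T (xseq m)), hTb]
      rw [hxs m, dist_comm _ y]
      have hl0 := (hlam m).1
      have hl1 := (hlam m).2
      have ham := ha m
      have hdnn : (0:ℝ) ≤ dist (xseq m) y := dist_nonneg
      nlinarith [hk, hb2, mul_le_mul_of_nonneg_left hb2 hl0,
        mul_nonneg (sub_nonneg.mpr hl1) (by nlinarith : (0:ℝ) ≤ 2 * dist (xseq m) y * δ + δ ^ 2),
        mul_nonneg hδ.le (sub_nonneg.mpr ham)]
    -- summed recursion
    have hsum : ∀ M : ℕ, dist (xseq M) y ^ 2 +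
        ∑ k ∈ Finset.range M, lam k * (1 - lam k) * c k ^ 2 ≤
        dist (xseq 0) y ^ 2 + M * (2 * dC * δ + δ ^ 2) := by
      intro M
      induction M with
      | zero => simp
      | succ M ih =>
        rw [Finset.sum_range_succ]
        have := hrec M
        push_cast
        linarith
    have hsum' := hsum (N + 1)
    -- lower bound on the sum
    have hlow : c N ^ 2 * (n₀ : ℝ) ≤ ∑ k ∈ Finset.range (N + 1), lam k * (1 - lam k) * c k ^ 2 := by
      have h1 : ∀ k ∈ Finset.range (N + 1), c N ^ 2 * (lam k * (1 - lam k)) ≤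
          lam k * (1 - lam k) * c k ^ 2 := by
        intro k hk
        rw [Finset.mem_range] at hk
        have hck : c N ≤ c k := hanti (by omega)
        have : c N ^ 2 ≤ c k ^ 2 := by nlinarith [hcnn N, hcnn k]
        have hlk : 0 ≤ lam k * (1 - lam k) :=
          mul_nonneg (hlam k).1 (sub_nonneg.mpr (hlam k).2)
        nlinarith
      calc c N ^ 2 * (n₀ : ℝ) ≤ c N ^ 2 * ∑ k ∈ Finset.range (N + 1), lam k * (1 - lam k) := by
            apply mul_le_mul_of_nonneg_left _ (sq_nonneg _)
            exact hθ n₀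
        _ = ∑ k ∈ Finset.range (N + 1), c N ^ 2 * (lam k * (1 - lam k)) := by
            rw [Finset.mul_sum]
        _ ≤ _ := Finset.sum_le_sum h1
    -- combine
    have hx0y : dist (xseq 0) y ≤ dC := ha 0
    have hxNy : (0:ℝ) ≤ dist (xseq (N + 1)) y := dist_nonneg
    have hextra : ((N:ℝ) + 1) * (2 * dC * δ + δ ^ 2) ≤ η := by
      have hδ2 : δ ≤ η / ((N + 1) * (2 * dC + 2)) := min_le_right _ _
      have h1 : 2 * dC * δ + δ ^ 2 ≤ δ * (2 * dC + 2) := by nlinarith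
      have h2 : ((N:ℝ) + 1) * (δ * (2 * dC + 2)) ≤ η := by
        rw [le_div_iff₀ hden] at hδ2
        calc ((N:ℝ) + 1) * (δ * (2 * dC + 2)) = δ * (((N:ℝ) + 1) * (2 * dC + 2)) := by ring
          _ ≤ η := hδ2
      have h3 : ((N:ℝ) + 1) * (2 * dC * δ + δ ^ 2) ≤ ((N:ℝ) + 1) * (δ * (2 * dC + 2)) :=
        mul_le_mul_of_nonneg_left h1 (by positivity)
      exact h3.trans h2
    have h0le : (0:ℝ) ≤ dist (xseq 0) y := dist_nonneg
    push_cast at hsum'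
    nlinarith [hsum', hlow, hextra, hx0y, hxNy, h0le]
  -- conclude
  have hn₀pos : 0 < n₀ := by
    rw [hn₀]
    apply Nat.ceil_pos.mpr
    apply div_pos (by nlinarith) (by positivity)
  have hceil : 8 * (dC + 1) ^ 2 / ε ^ 2 ≤ (n₀ : ℝ) := Nat.le_ceil _
  have h8 : 8 * (dC + 1) ^ 2 ≤ (n₀ : ℝ) * ε ^ 2 := by
    rw [div_le_iff₀ (by positivity)] at hceil
    linarith
  have hcN2 : c N ^ 2 ≤ ε ^ 2 := by
    nlinarith [hkeybd, sq_nonneg (c N), hcnn N, sq_nonneg ε, sq_nonneg (dC + 1),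
      mul_le_mul_of_nonneg_left h8 (sq_nonneg (c N)),
      mul_le_mul_of_nonneg_right hkeybd (sq_nonneg ε)]
  have hcN : c N ≤ ε := by nlinarith [hcnn N, hε]
  calc dist (xseq n) (T (xseq n)) = c n := rfl
    _ ≤ c N := hanti hn
    _ ≤ ε := hcN
end
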